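/- arXiv:nlin/0209026 — 15 statements merged into one kernel-verified Lean document; each statement's English description precedes it below -/
import Mathlib

section
/- Let λ ∈ ℝ and let u, ψ, ψ* : ℝ → ℝ be smooth functions satisfying ψ''' = −λ·u·ψ and (ψ*)''' = λ·u·ψ* on all of ℝ. Then the function A := ψ·(ψ*)' − ψ*·ψ' satisfies A''' = λ·( u·(ψψ*)' + 2·(u·ψψ*)' ) on ℝ. -/
section aux

variable {u ψ ψs : ℝ → ℝ} {lam : ℝ}

private lemma smooth_deriv (hψ : ContDiff ℝ ((⊤ : ℕ∞) : WithTop ℕ∞) ψ) : ContDiff ℝ ((⊤ : ℕ∞) : WithTop ℕ∞) (deriv ψ) :=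
  (contDiff_infty_iff_deriv.mp hψ).2

private lemma diffAt (hψ : ContDiff ℝ ((⊤ : ℕ∞) : WithTop ℕ∞) ψ) (x : ℝ) : DifferentiableAt ℝ ψ x :=
  (hψ.differentiable (by simp)).differentiableAt

private lemma iter3 (ψ : ℝ → ℝ) :
    iteratedDeriv 3 ψ = deriv (deriv (deriv ψ)) := by
  rw [show (3:ℕ) = 2 + 1 from rfl, iteratedDeriv_succ, iteratedDeriv_succ,
    iteratedDeriv_one]

end aux

/-- If `ψ''' = -λuψ` and `(ψ*)''' = λuψ*` on ℝ (all functions smooth), then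
`A := ψ(ψ*)' - ψ*ψ'` satisfies `A''' = λ(u(ψψ*)' + 2(uψψ*)')`. -/
theorem stmt_0 (lam : ℝ) (u ψ ψs : ℝ → ℝ)
    (hu : ContDiff ℝ (⊤ : ℕ∞) u) (hψ : ContDiff ℝ (⊤ : ℕ∞) ψ) (hψs : ContDiff ℝ (⊤ : ℕ∞) ψs)
    (h1 : ∀ x, iteratedDeriv 3 ψ x = -lam * u x * ψ x)
    (h2 : ∀ x, iteratedDeriv 3 ψs x = lam * u x * ψs x) :
    ∀ x, iteratedDeriv 3 (fun y => ψ y * deriv ψs y - ψs y * deriv ψ y) x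
      = lam * (u x * deriv (fun y => ψ y * ψs y) x
          + 2 * deriv (fun y => u y * (ψ y * ψs y)) x) := by
  intro x
  have hu : ContDiff ℝ ((⊤ : ℕ∞) : WithTop ℕ∞) u := hu.of_le (by simp)
  have hψ : ContDiff ℝ ((⊤ : ℕ∞) : WithTop ℕ∞) ψ := hψ.of_le (by simp)
  have hψs : ContDiff ℝ ((⊤ : ℕ∞) : WithTop ℕ∞) ψs := hψs.of_le (by simp)
  have hψ1 := smooth_deriv hψ
  have hψ2 := smooth_deriv hψ1
  have hψs1 := smooth_deriv hψs
  have hψs2 := smooth_deriv hψs1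
  -- third derivatives as functions
  have h1' : deriv (deriv (deriv ψ)) = fun y => -lam * u y * ψ y := by
    funext y; rw [← iter3]; exact h1 y
  have h2' : deriv (deriv (deriv ψs)) = fun y => lam * u y * ψs y := by
    funext y; rw [← iter3]; exact h2 y
  rw [iter3]
  -- first derivative of A
  have e1 : deriv (fun y => ψ y * deriv ψs y - ψs y * deriv ψ y)
      = fun y => ψ y * deriv (deriv ψs) y - ψs y * deriv (deriv ψ) y := by
    funext y
    rw [deriv_fun_sub ((diffAt hψ y).fun_mul (diffAt hψs1 y)) ((diffAt hψs y).fun_mul (diffAt hψ1 y)),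
      deriv_fun_mul (diffAt hψ y) (diffAt hψs1 y),
      deriv_fun_mul (diffAt hψs y) (diffAt hψ1 y)]
    ring
  rw [e1]
  -- second derivative of A
  have e2 : deriv (fun y => ψ y * deriv (deriv ψs) y - ψs y * deriv (deriv ψ) y)
      = fun y => deriv ψ y * deriv (deriv ψs) y + ψ y * (lam * u y * ψs y)
        - (deriv ψs y * deriv (deriv ψ) y + ψs y * (-lam * u y * ψ y)) := by
    funext y
    rw [deriv_fun_sub ((diffAt hψ y).fun_mul (diffAt hψs2 y)) ((diffAt hψs y).fun_mul (diffAt hψ2 y)),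
      deriv_fun_mul (diffAt hψ y) (diffAt hψs2 y),
      deriv_fun_mul (diffAt hψs y) (diffAt hψ2 y)]
    have := congrFun h1' y
    have := congrFun h2' y
    simp only [congrFun h1' y, congrFun h2' y]
  rw [e2]
  -- third derivative of A, pointwise at x
  have du := diffAt hu x
  have dψ := diffAt hψ x; have dψs := diffAt hψs x
  have dψ1 := diffAt hψ1 x; have dψs1 := diffAt hψs1 x
  have dψ2 := diffAt hψ2 x; have dψs2 := diffAt hψs2 x
  have dL : DifferentiableAt ℝ (fun y => lam * u y * ψs y) x :=
    ((differentiableAt_const _).mul du).mul dψs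
  have dL' : DifferentiableAt ℝ (fun y => -lam * u y * ψ y) x :=
    ((differentiableAt_const _).mul du).mul dψ
  rw [deriv_fun_sub ((dψ1.fun_mul dψs2).fun_add (dψ.fun_mul dL)) ((dψs1.fun_mul dψ2).fun_add (dψs.fun_mul dL')),
    deriv_fun_add (dψ1.fun_mul dψs2) (dψ.fun_mul dL),
    deriv_fun_add (dψs1.fun_mul dψ2) (dψs.fun_mul dL'),
    deriv_fun_mul dψ1 dψs2, deriv_fun_mul dψ dL,
    deriv_fun_mul dψs1 dψ2, deriv_fun_mul dψs dL',
    deriv_fun_mul ((differentiableAt_const lam).fun_mul du) dψs,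
    deriv_fun_mul ((differentiableAt_const (-lam)).fun_mul du) dψ,
    deriv_const_mul _ du, deriv_const_mul _ du]
  -- replace remaining third derivatives at x
  have r1 : deriv (deriv (deriv ψ)) x = -lam * u x * ψ x := by rw [h1']
  have r2 : deriv (deriv (deriv ψs)) x = lam * u x * ψs x := by rw [h2']
  rw [r1, r2, deriv_fun_mul dψ dψs, deriv_fun_mul du (dψ.fun_mul dψs), deriv_fun_mul dψ dψs]
  ring
end

section
/- Let λ ∈ ℝ and let u, ψ, ψ* : ℝ → ℝ be smooth functions satisfying ψ''' = −λ·u·ψ and (ψ*)''' = λ·u·ψ* on all of ℝ. Then, with A := ψ·(ψ*)' − ψ*·ψ', the fifth derivative of the product ψψ* satisfies (ψψ*)⁽⁵⁾ = −3λ·( 2u·A' + (u·A)' ) on ℝ. -/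
/-- If `ψ''' = -λuψ` and `(ψ*)''' = λuψ*` on ℝ (all functions smooth), then with
`A := ψ(ψ*)' - ψ*ψ'` one has `(ψψ*)⁽⁵⁾ = -3λ(2uA' + (uA)')`. -/
theorem stmt_1 (lam : ℝ) (u ψ ψs : ℝ → ℝ)
    (hu : ContDiff ℝ (⊤ : ℕ∞) u) (hψ : ContDiff ℝ (⊤ : ℕ∞) ψ) (hψs : ContDiff ℝ (⊤ : ℕ∞) ψs)
    (h1 : ∀ x, iteratedDeriv 3 ψ x = -lam * u x * ψ x)
    (h2 : ∀ x, iteratedDeriv 3 ψs x = lam * u x * ψs x)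
    (A : ℝ → ℝ) (hA : A = fun y => ψ y * deriv ψs y - ψs y * deriv ψ y) :
    ∀ x, iteratedDeriv 5 (fun y => ψ y * ψs y) x
      = -3 * lam * (2 * u x * deriv A x + deriv (fun y => u y * A y) x) := by
  have D : ∀ f : ℝ → ℝ, ContDiff ℝ (⊤ : ℕ∞) f → ContDiff ℝ (⊤ : ℕ∞) (deriv f) :=
    fun f hf => (contDiff_infty_iff_deriv.mp hf).2
  have cψ1 := D ψ (hψ.of_le (by simp))
  have cψ2 := D _ cψ1
  have cs1 := D ψs (hψs.of_le (by simp))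
  have cs2 := D _ cs1
  have dψ0 : Differentiable ℝ ψ := hψ.differentiable (by simp)
  have dψ1 : Differentiable ℝ (deriv ψ) := cψ1.differentiable (by norm_num)
  have dψ2 : Differentiable ℝ (deriv (deriv ψ)) := cψ2.differentiable (by norm_num)
  have ds0 : Differentiable ℝ ψs := hψs.differentiable (by simp)
  have ds1 : Differentiable ℝ (deriv ψs) := cs1.differentiable (by norm_num)
  have ds2 : Differentiable ℝ (deriv (deriv ψs)) := cs2.differentiable (by norm_num)
  have du0 : Differentiable ℝ u := hu.differentiable (by simp)
  have h1' : ∀ x, deriv (deriv (deriv ψ)) x = -lam * u x * ψ x := by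
    intro x
    have := h1 x
    simpa [iteratedDeriv_succ, iteratedDeriv_zero] using this
  have h2' : ∀ x, deriv (deriv (deriv ψs)) x = lam * u x * ψs x := by
    intro x
    have := h2 x
    simpa [iteratedDeriv_succ, iteratedDeriv_zero] using this
  -- first derivative
  have d1 : deriv (fun y => ψ y * ψs y)
      = fun y => deriv ψ y * ψs y + ψ y * deriv ψs y := by
    funext y; exact deriv_mul (dψ0 y) (ds0 y)
  -- second derivative
  have d2 : deriv (fun y => deriv ψ y * ψs y + ψ y * deriv ψs y)
      = fun y => deriv (deriv ψ) y * ψs y + 2 * (deriv ψ y * deriv ψs y)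
          + ψ y * deriv (deriv ψs) y := by
    funext y
    rw [deriv_fun_add ((dψ1 y).fun_mul (ds0 y)) ((dψ0 y).fun_mul (ds1 y)),
      deriv_fun_mul (dψ1 y) (ds0 y), deriv_fun_mul (dψ0 y) (ds1 y)]
    ring
  -- third derivative
  have d3 : deriv (fun y => deriv (deriv ψ) y * ψs y + 2 * (deriv ψ y * deriv ψs y)
        + ψ y * deriv (deriv ψs) y)
      = fun y => 3 * (deriv (deriv ψ) y * deriv ψs y + deriv ψ y * deriv (deriv ψs) y) := by
    funext y
    rw [deriv_fun_add (((dψ2 y).fun_mul (ds0 y)).fun_add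
        (((dψ1 y).fun_mul (ds1 y)).const_mul 2)) ((dψ0 y).fun_mul (ds2 y)),
      deriv_fun_add ((dψ2 y).fun_mul (ds0 y)) (((dψ1 y).fun_mul (ds1 y)).const_mul 2),
      deriv_const_mul 2 ((dψ1 y).fun_mul (ds1 y)),
      deriv_fun_mul (dψ2 y) (ds0 y), deriv_fun_mul (dψ1 y) (ds1 y), deriv_fun_mul (dψ0 y) (ds2 y),
      h1' y, h2' y]
    ring
  -- derivative of A
  have dA : deriv A = fun y => ψ y * deriv (deriv ψs) y - ψs y * deriv (deriv ψ) y := by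
    rw [hA]; funext y
    rw [deriv_fun_sub ((dψ0 y).fun_mul (ds1 y)) ((ds0 y).fun_mul (dψ1 y)),
      deriv_fun_mul (dψ0 y) (ds1 y), deriv_fun_mul (ds0 y) (dψ1 y)]
    ring
  have dAdiff : Differentiable ℝ A := by
    rw [hA]; exact (dψ0.mul ds1).sub (ds0.mul dψ1)
  -- fourth derivative
  have d4 : deriv (fun y => 3 * (deriv (deriv ψ) y * deriv ψs y
        + deriv ψ y * deriv (deriv ψs) y))
      = fun y => 3 * (-lam * (u y * A y) + 2 * (deriv (deriv ψ) y * deriv (deriv ψs) y)) := by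
    funext y
    rw [deriv_const_mul 3 (((dψ2 y).fun_mul (ds1 y)).fun_add ((dψ1 y).fun_mul (ds2 y))),
      deriv_fun_add ((dψ2 y).fun_mul (ds1 y)) ((dψ1 y).fun_mul (ds2 y)),
      deriv_fun_mul (dψ2 y) (ds1 y), deriv_fun_mul (dψ1 y) (ds2 y), h1' y, h2' y, hA]
    ring
  intro x
  have duA : DifferentiableAt ℝ (fun y => u y * A y) x := (du0 x).mul (dAdiff x)
  have key : iteratedDeriv 5 (fun y => ψ y * ψs y) x
      = deriv (fun y => 3 * (-lam * (u y * A y)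
          + 2 * (deriv (deriv ψ) y * deriv (deriv ψs) y))) x := by
    simp only [iteratedDeriv_succ, iteratedDeriv_zero]
    rw [d1, d2, d3, d4]
  rw [key,
    deriv_const_mul 3 (((duA.const_mul (-lam))).fun_add (((dψ2 x).fun_mul (ds2 x)).const_mul 2)),
    deriv_fun_add ((duA.const_mul (-lam))) (((dψ2 x).fun_mul (ds2 x)).const_mul 2),
    deriv_const_mul (-lam) duA,
    deriv_const_mul 2 ((dψ2 x).fun_mul (ds2 x)),
    deriv_fun_mul (dψ2 x) (ds2 x), h1' x, h2' x, dA]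
  ring
end

section
/- Let u : ℝ → ℝ be smooth with u(x) > 0 for all x, and define G₀ := ( (u^{-1/3})'' − 2·((u^{-1/6})')² ) / u. Then u·G₀' + 2·(u·G₀)' = 3·(u^{-1/3})''' holds identically on ℝ. (Consequently, since 2u(u^{-1/3})' + (u^{2/3})' = 0, applying Υ* = 2u∂+∂u to the antiderivative 3u^{-1/3} of the third antiderivative gives J G₀ = 0, i.e. G₀ lies in the kernel of J = −3(2u∂+∂u)∂⁻³(u∂+2∂u).) -/
open scoped ContDiff


/-- For smooth positive `u : ℝ → ℝ` and
`G₀ := ((u^{-1/3})'' - 2((u^{-1/6})')²)/u`, one has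
`u·G₀' + 2·(u·G₀)' = 3·(u^{-1/3})'''` identically on ℝ. -/
theorem stmt_3 (u : ℝ → ℝ) (hu : ContDiff ℝ (⊤ : ℕ∞) u) (hpos : ∀ x, 0 < u x)
    (G0 : ℝ → ℝ)
    (hG0 : G0 = fun x =>
      (iteratedDeriv 2 (fun y => u y ^ (-(1:ℝ)/3)) x
        - 2 * (deriv (fun y => u y ^ (-(1:ℝ)/6)) x) ^ 2) / u x) :
    ∀ x, u x * deriv G0 x + 2 * deriv (fun y => u y * G0 y) x
      = 3 * iteratedDeriv 3 (fun y => u y ^ (-(1:ℝ)/3)) x := by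
  intro x
  set s : ℝ → ℝ := fun y => u y ^ (-(1:ℝ)/6) with hsdef
  have hu' : ContDiff ℝ ∞ u := hu.of_le (by simp)
  have hs : ContDiff ℝ ∞ s := hu'.rpow_const_of_ne (fun y => (hpos y).ne')
  have hs1 : ContDiff ℝ ∞ (deriv s) := by
    have := hs.iterate_deriv 1; simpa using this
  have hs2 : ContDiff ℝ ∞ (deriv (deriv s)) := by
    have := hs.iterate_deriv 2; simpa [Function.iterate_succ'] using this
  have hdu : ∀ y, HasDerivAt u (deriv u y) y :=
    fun y => (hu'.differentiable (by norm_num)).differentiableAt.hasDerivAt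
  have hds : ∀ y, HasDerivAt s (deriv s y) y :=
    fun y => (hs.differentiable (by norm_num)).differentiableAt.hasDerivAt
  have hds1 : ∀ y, HasDerivAt (deriv s) (deriv (deriv s) y) y :=
    fun y => (hs1.differentiable (by norm_num)).differentiableAt.hasDerivAt
  have hds2 : ∀ y, HasDerivAt (deriv (deriv s)) (deriv (deriv (deriv s)) y) y :=
    fun y => (hs2.differentiable (by norm_num)).differentiableAt.hasDerivAt
  -- rpow bookkeeping
  have key : ∀ (y : ℝ) (n : ℕ), s y ^ n = u y ^ (-(n : ℝ)/6) := by
    intro y n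
    rw [hsdef]
    rw [← Real.rpow_natCast (u y ^ (-(1:ℝ)/6)) n, ← Real.rpow_mul (hpos y).le]
    congr 1; ring
  have hpow2 : (fun y => u y ^ (-(1:ℝ)/3)) = fun y => s y ^ 2 := by
    funext y; rw [key y 2, show -((2:ℕ):ℝ)/6 = -(1:ℝ)/3 by norm_num]
  have hu6 : ∀ y, u y * s y ^ 6 = 1 := by
    intro y
    rw [key y 6, show -((6:ℕ):ℝ)/6 = (-1 : ℝ) by norm_num, Real.rpow_neg_one]
    exact mul_inv_cancel₀ (hpos y).ne'
  have h6 : ∀ y, 6 * (u y * deriv s y) = -(s y * deriv u y) := by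
    intro y
    have hds' : HasDerivAt s (deriv u y * (-(1:ℝ)/6) * u y ^ (-(1:ℝ)/6 - 1)) y :=
      (hdu y).rpow_const (Or.inl (hpos y).ne')
    have h1 : deriv s y = deriv u y * (-(1:ℝ)/6) * u y ^ (-(1:ℝ)/6 - 1) := hds'.deriv
    have h2 : u y ^ (-(1:ℝ)/6 - 1) * u y = s y := by
      rw [hsdef, ← Real.rpow_add_one (hpos y).ne' (-(1:ℝ)/6 - 1)]
      norm_num
    rw [h1]
    linear_combination (-(deriv u y)) * h2
  -- first and second derivatives of s^2
  have hp1 : deriv (fun y => s y ^ 2) = fun y => 2 * s y * deriv s y := by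
    funext y
    have h : HasDerivAt (fun z => s z ^ 2) (2 * s y * deriv s y) y := by
      have h0 := (hds y).pow 2
      have : ((2:ℕ) : ℝ) * s y ^ (2 - 1) * deriv s y = 2 * s y * deriv s y := by
        push_cast; ring
      rwa [this] at h0
    exact h.deriv
  have hp2 : deriv (fun y => 2 * s y * deriv s y)
      = fun y => 2 * deriv s y * deriv s y + 2 * s y * deriv (deriv s) y := by
    funext y
    exact (((hds y).const_mul 2).mul (hds1 y)).deriv
  have h3 : HasDerivAt (fun y => 2 * deriv s y * deriv s y + 2 * s y * deriv (deriv s) y)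
      (2 * deriv (deriv s) x * deriv s x + 2 * deriv s x * deriv (deriv s) x
        + (2 * deriv s x * deriv (deriv s) x + 2 * s x * deriv (deriv (deriv s)) x)) x :=
    (((hds1 x).const_mul 2).mul (hds1 x)).add (((hds x).const_mul 2).mul (hds2 x))
  -- closed form for G0
  have hG0' : G0 = fun y => 2 * s y ^ 7 * deriv (deriv s) y := by
    rw [hG0, hpow2]
    funext y
    have h22 : iteratedDeriv 2 (fun y => s y ^ 2) = deriv (deriv (fun y => s y ^ 2)) := by
      rw [iteratedDeriv_eq_iterate]; rfl
    rw [h22, hp1, hp2]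
    rw [div_eq_iff (hpos y).ne']
    linear_combination (-(2 * s y * deriv (deriv s) y)) * hu6 y
  -- derivative of G0
  have hdG0F : HasDerivAt (fun y => 2 * s y ^ 7 * deriv (deriv s) y)
      (14 * s x ^ 6 * deriv s x * deriv (deriv s) x
        + 2 * s x ^ 7 * deriv (deriv (deriv s)) x) x := by
    have h0 := (((hds x).pow 7).const_mul 2).mul (hds2 x)
    have he : 2 * (((7:ℕ):ℝ) * s x ^ (7 - 1) * deriv s x) * deriv (deriv s) x
        + 2 * s x ^ 7 * deriv (deriv (deriv s)) x
        = 14 * s x ^ 6 * deriv s x * deriv (deriv s) x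
          + 2 * s x ^ 7 * deriv (deriv (deriv s)) x := by
      push_cast; ring
    rw [← he]; exact h0
  have hdG0 : HasDerivAt G0
      (14 * s x ^ 6 * deriv s x * deriv (deriv s) x
        + 2 * s x ^ 7 * deriv (deriv (deriv s)) x) x := by
    rw [hG0']; exact hdG0F
  have hdUG : HasDerivAt (fun y => u y * G0 y)
      (deriv u x * G0 x + u x * (14 * s x ^ 6 * deriv s x * deriv (deriv s) x
        + 2 * s x ^ 7 * deriv (deriv (deriv s)) x)) x := (hdu x).mul hdG0
  have h33 : iteratedDeriv 3 (fun y => s y ^ 2) x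
      = deriv (deriv (deriv (fun y => s y ^ 2))) x := by
    rw [iteratedDeriv_eq_iterate]; rfl
  rw [hdG0.deriv, hdUG.deriv, hpow2, h33, hp1, hp2, h3.deriv, hG0']
  simp only
  linear_combination (18 * deriv s x * deriv (deriv s) x
      + 6 * s x * deriv (deriv (deriv s)) x) * hu6 x
    + (4 * s x ^ 6 * deriv (deriv s) x) * h6 x
end

section
/- Let λ ∈ ℝ and let u, G : ℝ → ℝ be smooth. Let Q : ℝ → ℝ satisfy Q' = u·G' and let P : ℝ → ℝ satisfy P'' = Q + 2u·G (so that P''' = uG' + 2(uG)' = ΥG). Define the 3×3 matrix-valued functions U = [[0,1,0],[0,0,1],[−λu,0,0]] and V = λ·[[−G''−3λP', 3(G'+λP), −6G], [−G'''−3λQ, 2G'', 3(−G'+λP)], [−G''''−3λ²uP, G'''−3λQ, −G''+3λP']]. Then V' − (U·V − V·U) is the 3×3 matrix whose only nonzero entry is the (3,1) entry, equal to −λ·( G⁽⁵⁾ + 3λ²·(3u·P' + u'·P) ). Equivalently, V solves the matrix equation V_x − [U,V] = U_*(KG − λ²JG), where KG = G⁽⁵⁾, JG = −3(2u(∂⁻³ΥG)'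 + (u·∂⁻³ΥG)') with ∂⁻³ΥG = P, and U_*(ξ) is the matrix with −λξ in the (3,1) entry and zeros elsewhere. -/
/-- With `Q' = uG'`, `P'' = Q + 2uG` (so `P''' = ΥG`), and the matrices
`U`, `V` of the paper, `V' - [U,V]` is the matrix whose only nonzero entry is the (3,1)
entry `-λ(G⁽⁵⁾ + 3λ²(3uP' + u'P))`, i.e. `V_x - [U,V] = U_*(KG - λ²JG)`. -/
theorem stmt_4 (lam : ℝ) (u G Q P : ℝ → ℝ)
    (hu : ContDiff ℝ (⊤ : ℕ∞) u) (hG : ContDiff ℝ (⊤ : ℕ∞) G)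
    (hQ : ContDiff ℝ (⊤ : ℕ∞) Q) (hP : ContDiff ℝ (⊤ : ℕ∞) P)
    (hQ' : ∀ x, deriv Q x = u x * deriv G x)
    (hP'' : ∀ x, deriv (deriv P) x = Q x + 2 * u x * G x)
    (U V : ℝ → Matrix (Fin 3) (Fin 3) ℝ)
    (hU : U = fun x => !![0, 1, 0; 0, 0, 1; -lam * u x, 0, 0])
    (hV : V = fun x => lam • !![
      -iteratedDeriv 2 G x - 3 * lam * deriv P x,
        3 * (deriv G x + lam * P x),
        -6 * G x;
      -iteratedDeriv 3 G x - 3 * lam * Q x,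
        2 * iteratedDeriv 2 G x,
        3 * (-deriv G x + lam * P x);
      -iteratedDeriv 4 G x - 3 * lam ^ 2 * u x * P x,
        iteratedDeriv 3 G x - 3 * lam * Q x,
        -iteratedDeriv 2 G x + 3 * lam * deriv P x]) :
    ∀ x, (Matrix.of fun i j => deriv (fun y => V y i j) x)
        - (U x * V x - V x * U x)
      = Matrix.of fun i j : Fin 3 => if i = 2 ∧ j = 0 then
          -lam * (iteratedDeriv 5 G x
            + 3 * lam ^ 2 * (3 * u x * deriv P x + deriv u x * P x))
        else 0 := by
  intro x
  subst hU hV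
  have hG' : ContDiff ℝ ((⊤ : ℕ∞) : WithTop ℕ∞) G := hG.of_le (by simp)
  have hP' : ContDiff ℝ ((⊤ : ℕ∞) : WithTop ℕ∞) P := hP.of_le (by simp)
  have hQi : ContDiff ℝ ((⊤ : ℕ∞) : WithTop ℕ∞) Q := hQ.of_le (by simp)
  have hui : ContDiff ℝ ((⊤ : ℕ∞) : WithTop ℕ∞) u := hu.of_le (by simp)
  have HGn : ∀ n : ℕ, ContDiff ℝ ((⊤ : ℕ∞) : WithTop ℕ∞) (iteratedDeriv n G) := by
    intro n
    rw [iteratedDeriv_eq_iterate]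
    exact hG'.iterate_deriv n
  have HG : ∀ n : ℕ, HasDerivAt (iteratedDeriv n G) (iteratedDeriv (n+1) G x) x := by
    intro n
    rw [iteratedDeriv_succ]
    exact ((HGn n).differentiable (by norm_num) x).hasDerivAt
  have hG1 : HasDerivAt G (deriv G x) x := (hG'.differentiable (by norm_num) x).hasDerivAt
  have hG2 : HasDerivAt (deriv G) (iteratedDeriv 2 G x) x := by
    have := HG 1
    rwa [iteratedDeriv_one] at this
  have hP1 : HasDerivAt P (deriv P x) x := (hP'.differentiable (by norm_num) x).hasDerivAt
  have hP2 : HasDerivAt (deriv P) (Q x + 2 * u x * G x) x := by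
    have h := (((contDiff_infty_iff_deriv.mp hP').2).differentiable (by norm_num) x).hasDerivAt
    rwa [hP''] at h
  have hQ1 : HasDerivAt Q (u x * deriv G x) x := by
    have h := (hQi.differentiable (by norm_num) x).hasDerivAt
    rwa [hQ'] at h
  have hu1 : HasDerivAt u (deriv u x) x := (hui.differentiable (by norm_num) x).hasDerivAt
  ext i j
  fin_cases i <;> fin_cases j <;>
    simp only [Matrix.sub_apply, Matrix.of_apply, Matrix.mul_apply, Fin.sum_univ_three,
      Matrix.smul_apply, Matrix.cons_val', Matrix.cons_val_zero, Matrix.cons_val_one,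
      Matrix.head_cons, Matrix.empty_val', Matrix.cons_val_fin_one, Matrix.head_fin_const,
      Matrix.cons_val_two, Matrix.tail_cons, smul_eq_mul, Fin.mk_zero, Fin.mk_one] <;>
    norm_num
  all_goals try (
    simp only [
      (show deriv (fun y => -iteratedDeriv 2 G y - 3 * lam * deriv P y) x = _ from
        ((HG 2).neg.sub (hP2.const_mul (3*lam))).deriv),
      (show deriv (fun y => deriv G y + lam * P y) x = _ from
        (hG2.add (hP1.const_mul lam)).deriv),
      (show deriv (fun y => -iteratedDeriv 3 G y - 3 * lam * Q y) x = _ from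
        ((HG 3).neg.sub (hQ1.const_mul (3*lam))).deriv),
      (show deriv (fun y => -deriv G y + lam * P y) x = _ from
        (hG2.neg.add (hP1.const_mul lam)).deriv),
      (show deriv (fun y => -iteratedDeriv 4 G y - 3 * lam ^ 2 * u y * P y) x = _ from
        ((HG 4).neg.sub ((hu1.const_mul (3*lam^2)).mul hP1)).deriv),
      (show deriv (fun y => iteratedDeriv 3 G y - 3 * lam * Q y) x = _ from
        ((HG 3).sub (hQ1.const_mul (3*lam))).deriv),
      (show deriv (fun y => -iteratedDeriv 2 G y + 3 * lam * deriv P y) x = _ from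
        ((HG 2).neg.add (hP2.const_mul (3*lam))).deriv),
      (show deriv (iteratedDeriv 2 G) x = _ from (HG 2).deriv),
      hG1.deriv, hP1.deriv, hQ1.deriv, hP2.deriv])
  all_goals try rw [if_neg (by decide)]
  all_goals try rw [if_pos (by decide)]
  all_goals ring
end

section
/- Let u : ℝ² → ℝ be smooth with u(x,t) > 0 everywhere, let λ ∈ ℝ with λ ≠ 0, and set G := u^{-2/3}. Define the 3×3 matrix-valued functions U = [[0,1,0],[0,0,1],[−λu,0,0]] and V = λ·[[−G_{xx}, 3G_x, −6G], [−G_{xxx}+6λu^{1/3}, 2G_{xx}, −3G_x], [−G_{xxxx}, G_{xxx}+6λu^{1/3}, −G_{xx}]]. Then at every point (x,t), the zero-curvature equation U_t − V_x + (U·V − V·U) = 0 holds if and only if u_t = ∂⁵_x( u^{-2/3} ) at that point. In fact U_t − V_x + [U,V] is the matrix whose only nonzero entry is the (3,1) entry −λ·( u_t − ∂⁵_x(u^{-2/3}) ). -/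
/-- zero-curvature representation of the fifth-order equation
`u_t = ∂⁵ₓ(u^{-2/3})`: with `G = u^{-2/3}` and the matrices `U`, `V` of the paper,
`U_t - V_x + [U,V]` has `-λ(u_t - ∂⁵ₓ(u^{-2/3}))` as its only nonzero entry (the (3,1)
entry); in particular the zero-curvature equation holds iff `u_t = ∂⁵ₓ(u^{-2/3})`. -/
theorem stmt_5 (u : ℝ → ℝ → ℝ)
    (hu : ContDiff ℝ (⊤ : ℕ∞) (fun p : ℝ × ℝ => u p.1 p.2))
    (hpos : ∀ x t, 0 < u x t) (lam : ℝ) (hlam : lam ≠ 0)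
    (G : ℝ → ℝ → ℝ) (hGdef : G = fun x t => u x t ^ (-(2:ℝ)/3))
    (U V : ℝ → ℝ → Matrix (Fin 3) (Fin 3) ℝ)
    (hU : U = fun x t => !![0, 1, 0; 0, 0, 1; -lam * u x t, 0, 0])
    (hV : V = fun x t => lam • !![
      -(iteratedDeriv 2 (fun y => G y t) x),
        3 * deriv (fun y => G y t) x,
        -6 * G x t;
      -(iteratedDeriv 3 (fun y => G y t) x) + 6 * lam * u x t ^ ((1:ℝ)/3),
        2 * iteratedDeriv 2 (fun y => G y t) x,
        -3 * deriv (fun y => G y t) x;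
      -(iteratedDeriv 4 (fun y => G y t) x),
        iteratedDeriv 3 (fun y => G y t) x + 6 * lam * u x t ^ ((1:ℝ)/3),
        -(iteratedDeriv 2 (fun y => G y t) x)]) :
    ∀ x t,
      ((Matrix.of fun i j => deriv (fun s => U x s i j) t)
          - (Matrix.of fun i j => deriv (fun y => V y t i j) x)
          + (U x t * V x t - V x t * U x t)
        = Matrix.of fun i j : Fin 3 => if i = 2 ∧ j = 0 then
            -lam * (deriv (fun s => u x s) t
              - iteratedDeriv 5 (fun y => u y t ^ (-(2:ℝ)/3)) x)
          else 0)
      ∧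
      (((Matrix.of fun i j => deriv (fun s => U x s i j) t)
          - (Matrix.of fun i j => deriv (fun y => V y t i j) x)
          + (U x t * V x t - V x t * U x t) = 0)
        ↔ deriv (fun s => u x s) t
            = iteratedDeriv 5 (fun y => u y t ^ (-(2:ℝ)/3)) x) := by
  intro x t
  subst hGdef hU hV
  -- smoothness of x ↦ u x t
  have hf : ContDiff ℝ ((⊤:ℕ∞) : WithTop ℕ∞) (fun y => u y t) :=
    (hu.of_le (by simp)).comp (contDiff_id.prodMk contDiff_const)
  have hg : ContDiff ℝ ((⊤:ℕ∞) : WithTop ℕ∞) (fun y => u y t ^ (-(2:ℝ)/3)) :=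
    hf.rpow_const_of_ne (fun y => (hpos y t).ne')
  have hgd : ∀ n, Differentiable ℝ (iteratedDeriv n (fun y => u y t ^ (-(2:ℝ)/3))) := by
    intro n
    rw [iteratedDeriv_eq_iterate]
    exact (hg.iterate_deriv n).differentiable (by simp)
  have hD : ∀ n, HasDerivAt (iteratedDeriv n (fun y => u y t ^ (-(2:ℝ)/3)))
      (iteratedDeriv (n+1) (fun y => u y t ^ (-(2:ℝ)/3)) x) x := by
    intro n
    have h := (hgd n x).hasDerivAt
    rwa [show deriv (iteratedDeriv n (fun y => u y t ^ (-(2:ℝ)/3))) x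
        = iteratedDeriv (n+1) (fun y => u y t ^ (-(2:ℝ)/3)) x by rw [iteratedDeriv_succ]] at h
  have hD1 : HasDerivAt (fun y => deriv (fun z => u z t ^ (-(2:ℝ)/3)) y)
      (iteratedDeriv 2 (fun y => u y t ^ (-(2:ℝ)/3)) x) x := by
    have h := hD 1
    rwa [iteratedDeriv_one] at h
  have hux : HasDerivAt (fun y => u y t) (deriv (fun y => u y t) x) x :=
    ((hf.differentiable (by simp)) x).hasDerivAt
  have hgl1 : HasDerivAt (fun y => u y t ^ (-(2:ℝ)/3))
      (deriv (fun y => u y t) x * (-(2:ℝ)/3) * u x t ^ (-(2:ℝ)/3 - 1)) x :=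
    hux.rpow_const (Or.inl (hpos x t).ne')
  have hh1 : HasDerivAt (fun y => u y t ^ ((1:ℝ)/3))
      (deriv (fun y => u y t) x * ((1:ℝ)/3) * u x t ^ ((1:ℝ)/3 - 1)) x :=
    hux.rpow_const (Or.inl (hpos x t).ne')
  -- algebraic identities
  have hA : u x t ^ ((1:ℝ)/3) = u x t * u x t ^ (-(2:ℝ)/3) := by
    have h1 : u x t ^ ((1:ℝ) + -(2:ℝ)/3) = u x t ^ (1:ℝ) * u x t ^ (-(2:ℝ)/3) :=
      Real.rpow_add (hpos x t) _ _
    rw [Real.rpow_one] at h1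
    rw [← h1]
    norm_num
  have hB : u x t * u x t ^ (-(2:ℝ)/3 - 1) = u x t ^ ((1:ℝ)/3 - 1) := by
    have h1 : u x t ^ ((1:ℝ) + (-(2:ℝ)/3 - 1)) = u x t ^ (1:ℝ) * u x t ^ (-(2:ℝ)/3 - 1) :=
      Real.rpow_add (hpos x t) _ _
    rw [Real.rpow_one] at h1
    rw [← h1]
    norm_num
  have hKey : 2 * (deriv (fun y => u y t) x * ((1:ℝ)/3) * u x t ^ ((1:ℝ)/3 - 1))
      + u x t * deriv (fun y => u y t ^ (-(2:ℝ)/3)) x = 0 := by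
    rw [hgl1.deriv]
    linear_combination (-(2:ℝ)/3 * deriv (fun y => u y t) x) * hB
  have key : ((Matrix.of fun i j =>
        deriv (fun s => (!![0, 1, 0; 0, 0, 1; -lam * u x s, 0, 0] :
          Matrix (Fin 3) (Fin 3) ℝ) i j) t)
      - (Matrix.of fun i j => deriv (fun y => (lam • !![
          -(iteratedDeriv 2 (fun z => u z t ^ (-(2:ℝ)/3)) y),
            3 * deriv (fun z => u z t ^ (-(2:ℝ)/3)) y,
            -6 * u y t ^ (-(2:ℝ)/3);
          -(iteratedDeriv 3 (fun z => u z t ^ (-(2:ℝ)/3)) y) + 6 * lam * u y t ^ ((1:ℝ)/3),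
            2 * iteratedDeriv 2 (fun z => u z t ^ (-(2:ℝ)/3)) y,
            -3 * deriv (fun z => u z t ^ (-(2:ℝ)/3)) y;
          -(iteratedDeriv 4 (fun z => u z t ^ (-(2:ℝ)/3)) y),
            iteratedDeriv 3 (fun z => u z t ^ (-(2:ℝ)/3)) y + 6 * lam * u y t ^ ((1:ℝ)/3),
            -(iteratedDeriv 2 (fun z => u z t ^ (-(2:ℝ)/3)) y)] :
          Matrix (Fin 3) (Fin 3) ℝ) i j) x)
      + ((fun x t => (!![0, 1, 0; 0, 0, 1; -lam * u x t, 0, 0] : Matrix (Fin 3) (Fin 3) ℝ)) x t *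
          (fun x t => lam • !![
          -(iteratedDeriv 2 (fun y => u y t ^ (-(2:ℝ)/3)) x),
            3 * deriv (fun y => u y t ^ (-(2:ℝ)/3)) x,
            -6 * u x t ^ (-(2:ℝ)/3);
          -(iteratedDeriv 3 (fun y => u y t ^ (-(2:ℝ)/3)) x) + 6 * lam * u x t ^ ((1:ℝ)/3),
            2 * iteratedDeriv 2 (fun y => u y t ^ (-(2:ℝ)/3)) x,
            -3 * deriv (fun y => u y t ^ (-(2:ℝ)/3)) x;
          -(iteratedDeriv 4 (fun y => u y t ^ (-(2:ℝ)/3)) x),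
            iteratedDeriv 3 (fun y => u y t ^ (-(2:ℝ)/3)) x + 6 * lam * u x t ^ ((1:ℝ)/3),
            -(iteratedDeriv 2 (fun y => u y t ^ (-(2:ℝ)/3)) x)]) x t -
          (fun x t => lam • !![
          -(iteratedDeriv 2 (fun y => u y t ^ (-(2:ℝ)/3)) x),
            3 * deriv (fun y => u y t ^ (-(2:ℝ)/3)) x,
            -6 * u x t ^ (-(2:ℝ)/3);
          -(iteratedDeriv 3 (fun y => u y t ^ (-(2:ℝ)/3)) x) + 6 * lam * u x t ^ ((1:ℝ)/3),
            2 * iteratedDeriv 2 (fun y => u y t ^ (-(2:ℝ)/3)) x,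
            -3 * deriv (fun y => u y t ^ (-(2:ℝ)/3)) x;
          -(iteratedDeriv 4 (fun y => u y t ^ (-(2:ℝ)/3)) x),
            iteratedDeriv 3 (fun y => u y t ^ (-(2:ℝ)/3)) x + 6 * lam * u x t ^ ((1:ℝ)/3),
            -(iteratedDeriv 2 (fun y => u y t ^ (-(2:ℝ)/3)) x)]) x t *
          (fun x t => (!![0, 1, 0; 0, 0, 1; -lam * u x t, 0, 0] : Matrix (Fin 3) (Fin 3) ℝ)) x t)
        = Matrix.of fun i j : Fin 3 => if i = 2 ∧ j = 0 then
            -lam * (deriv (fun s => u x s) t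
              - iteratedDeriv 5 (fun y => u y t ^ (-(2:ℝ)/3)) x)
          else 0) := by
    ext i j
    fin_cases i <;> fin_cases j <;>
      simp only [Matrix.sub_apply, Matrix.add_apply, Matrix.of_apply, Matrix.smul_apply,
        Matrix.mul_apply, Fin.sum_univ_three, Fin.reduceFinMk, Fin.isValue,
        Matrix.cons_val_zero, Matrix.cons_val_one, Matrix.cons_val_two,
        Matrix.head_cons, Matrix.tail_cons, smul_eq_mul, Fin.reduceEq,
        one_mul, zero_mul, mul_zero, mul_one, add_zero, zero_add, and_self, and_false,
        false_and, if_true, if_false, ite_false, ite_true]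
    · -- (0,0)
      rw [deriv_const, deriv_const_mul_field, ((hD 2).fun_neg).deriv]
      linear_combination (6 * lam^2) * hA
    · -- (0,1)
      rw [deriv_const, deriv_const_mul_field, deriv_const_mul_field, hD1.deriv]
      ring
    · -- (0,2)
      rw [deriv_const, deriv_const_mul_field, deriv_const_mul_field]
      ring
    · -- (1,0)
      rw [deriv_const, deriv_const_mul_field, (((hD 3).fun_neg).fun_add (hh1.const_mul (6*lam))).deriv]
      linear_combination (-3 * lam^2) * hKey
    · -- (1,1)
      rw [deriv_const, deriv_const_mul_field, deriv_const_mul_field, (hD 2).deriv]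
      ring
    · -- (1,2)
      rw [deriv_const, deriv_const_mul_field, deriv_const_mul_field, hD1.deriv]
      ring
    · -- (2,0)
      rw [deriv_const_mul_field, deriv_const_mul_field, ((hD 4).fun_neg).deriv]
      ring
    · -- (2,1)
      rw [deriv_const, deriv_const_mul_field, ((hD 3).fun_add (hh1.const_mul (6*lam))).deriv]
      linear_combination (-3 * lam^2) * hKey
    · -- (2,2)
      rw [deriv_const, deriv_const_mul_field, ((hD 2).fun_neg).deriv]
      linear_combination (-6 * lam^2) * hA
  refine ⟨key, ?_⟩
  rw [key]
  constructor
  · intro h0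
    have h1 := congrFun (congrFun h0 2) 0
    simp only [Matrix.of_apply, Matrix.zero_apply, and_self, if_true, reduceIte] at h1
    have h2 : deriv (fun s => u x s) t - iteratedDeriv 5 (fun y => u y t ^ (-(2:ℝ)/3)) x = 0 := by
      rcases mul_eq_zero.mp h1 with h | h
      · exact absurd (neg_eq_zero.mp h) hlam
      · exact h
    linarith [h2]
  · intro h
    ext i j
    simp [h]
end

section
/- Let v : ℝ² → ℝ be smooth, let λ ∈ ℝ with λ ≠ 0, and set u := v_{xx}. Define the 3×3 matrix-valued functions U = [[0,1,0],[0,0,1],[−λu,0,0]] and V = [[v_x, −v, λ^{-1}], [0, 0, −v], [λ·v·u, 0, −v_x]]. Then at every point (x,t), the zero-curvature equation U_t − V_x + (U·V − V·U) = 0 holds if and only if u_t + v·u_x + 3·v_x·u = 0 at that point (i.e. if and only if v satisfies v_{xxt} + 3v_{xx}v_x + v_{xxx}v = 0). In fact U_t − V_x + [U,V] is the matrix whose only nonzero entry is the (3,1) entry −λ·( u_t + v u_x + 3 v_x u ). -/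
lemma pderiv_contDiff {G : ℝ × ℝ → ℝ} (hG : ContDiff ℝ (⊤ : ℕ∞) G) :
    ContDiff ℝ (⊤ : ℕ∞) (fun p : ℝ × ℝ => deriv (fun y => G (y, p.2)) p.1) := by
  have h : ∀ p : ℝ × ℝ, deriv (fun y => G (y, p.2)) p.1
      = fderiv ℝ (fun y => G (y, p.2)) p.1 1 := by
    intro p; rw [fderiv_apply_one_eq_deriv]
  simp only [h]
  exact ContDiff.fderiv_apply (f := fun (p : ℝ × ℝ) (y : ℝ) => G (y, p.2))
    (hG.comp (contDiff_snd.prodMk (contDiff_snd.comp contDiff_fst)))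
    contDiff_fst contDiff_const (by simp)


/-- zero-curvature representation of the first negative flow
`u_t + v u_x + 3 v_x u = 0`, `u = v_{xx}` (i.e. `v_{xxt} + 3v_{xx}v_x + v_{xxx}v = 0`):
with the matrices `U`, `V` of the paper, `U_t - V_x + [U,V]` has
`-λ(u_t + v u_x + 3 v_x u)` as its only nonzero entry (the (3,1) entry); in particular
the zero-curvature equation holds iff `u_t + v u_x + 3 v_x u = 0`. -/
theorem stmt_6 (v : ℝ → ℝ → ℝ)
    (hv : ContDiff ℝ (⊤ : ℕ∞) (fun p : ℝ × ℝ => v p.1 p.2))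
    (lam : ℝ) (hlam : lam ≠ 0)
    (u : ℝ → ℝ → ℝ) (hudef : u = fun x t => iteratedDeriv 2 (fun y => v y t) x)
    (U V : ℝ → ℝ → Matrix (Fin 3) (Fin 3) ℝ)
    (hU : U = fun x t => !![0, 1, 0; 0, 0, 1; -lam * u x t, 0, 0])
    (hV : V = fun x t => !![
      deriv (fun y => v y t) x, -v x t, lam⁻¹;
      0, 0, -v x t;
      lam * v x t * u x t, 0, -(deriv (fun y => v y t) x)]) :
    ∀ x t,
      ((Matrix.of fun i j => deriv (fun s => U x s i j) t)
          - (Matrix.of fun i j => deriv (fun y => V y t i j) x)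
          + (U x t * V x t - V x t * U x t)
        = Matrix.of fun i j : Fin 3 => if i = 2 ∧ j = 0 then
            -lam * (deriv (fun s => u x s) t
              + v x t * deriv (fun y => u y t) x + 3 * deriv (fun y => v y t) x * u x t)
          else 0)
      ∧
      (((Matrix.of fun i j => deriv (fun s => U x s i j) t)
          - (Matrix.of fun i j => deriv (fun y => V y t i j) x)
          + (U x t * V x t - V x t * U x t) = 0)
        ↔ deriv (fun s => u x s) t
            + v x t * deriv (fun y => u y t) x + 3 * deriv (fun y => v y t) x * u x t = 0) := by
  -- smoothness of u
  have hu_fun : ContDiff ℝ (⊤ : ℕ∞) (fun p : ℝ × ℝ => u p.1 p.2) := by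
    have h2 := pderiv_contDiff (pderiv_contDiff hv)
    have heq : (fun p : ℝ × ℝ => u p.1 p.2)
        = fun p : ℝ × ℝ => deriv (fun y => deriv (fun z => v z p.2) y) p.1 := by
      funext p; rw [hudef]; simp [iteratedDeriv_succ, iteratedDeriv_zero]
    rw [heq]; exact h2
  intro x t
  have hvd : DifferentiableAt ℝ (fun y => v y t) x :=
    ((hv.comp (contDiff_id.prodMk contDiff_const)).differentiable (by simp)).differentiableAt
  have hux : DifferentiableAt ℝ (fun y => u y t) x :=
    ((hu_fun.comp (contDiff_id.prodMk contDiff_const)).differentiable (by simp)).differentiableAt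
  have hut : DifferentiableAt ℝ (fun s => u x s) t :=
    ((hu_fun.comp (contDiff_const.prodMk contDiff_id)).differentiable (by simp)).differentiableAt
  -- derivative computations
  have hderiv_vx : deriv (fun y => deriv (fun z => v z t) y) x = u x t := by
    rw [hudef]; simp [iteratedDeriv_succ, iteratedDeriv_zero]
  have hUt20 : deriv (fun s => -lam * u x s) t = -lam * deriv (fun s => u x s) t :=
    deriv_const_mul _ hut
  have hV20x : deriv (fun y => lam * v y t * u y t) x
      = lam * (deriv (fun y => v y t) x * u x t + v x t * deriv (fun y => u y t) x) := by
    have : (fun y => lam * v y t * u y t) = fun y => lam * (v y t * u y t) := by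
      funext y; ring
    rw [this, deriv_const_mul (d := fun y => v y t * u y t) _ (hvd.mul hux), deriv_fun_mul hvd hux]
  have hVneg : deriv (fun y => -v y t) x = -deriv (fun y => v y t) x := deriv.neg
  have hVnegvx : deriv (fun y => -deriv (fun z => v z t) y) x = -(u x t) := by
    rw [deriv.fun_neg, hderiv_vx]
  have key : ((Matrix.of fun i j => deriv (fun s => U x s i j) t)
          - (Matrix.of fun i j => deriv (fun y => V y t i j) x)
          + (U x t * V x t - V x t * U x t)
        = Matrix.of fun i j : Fin 3 => if i = 2 ∧ j = 0 then
            -lam * (deriv (fun s => u x s) t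
              + v x t * deriv (fun y => u y t) x + 3 * deriv (fun y => v y t) x * u x t)
          else 0) := by
    simp only [hU, hV]
    ext i j
    fin_cases i <;> fin_cases j
    all_goals simp only [Matrix.sub_apply, Matrix.add_apply, Matrix.of_apply,
      Matrix.mul_apply, Fin.sum_univ_three, Matrix.cons_val', Matrix.cons_val_zero,
      Matrix.cons_val_one, Matrix.head_cons, Matrix.head_fin_const, Matrix.cons_val_fin_one,
      Matrix.empty_val', Matrix.cons_val_two, Matrix.tail_cons,
      hUt20, hV20x, hVneg, hVnegvx, hderiv_vx, deriv_const]
    all_goals (try simp [hUt20, hV20x, hVneg, hVnegvx, hderiv_vx, deriv_const, Fin.ext_iff,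
      Matrix.vecHead, Matrix.vecTail])
    all_goals (try field_simp)
    all_goals (try ring_nf)
  refine ⟨key, ?_⟩
  rw [key]
  constructor
  · intro h
    have h20 : (Matrix.of fun i j : Fin 3 => if i = 2 ∧ j = 0 then
            -lam * (deriv (fun s => u x s) t
              + v x t * deriv (fun y => u y t) x + 3 * deriv (fun y => v y t) x * u x t)
          else 0) 2 0 = (0 : Matrix (Fin 3) (Fin 3) ℝ) 2 0 := by rw [h]
    simp at h20
    exact h20.resolve_left hlam
  · intro h
    ext i j
    simp [h]
end

section
/- Let u : ℝ² → ℝ be smooth with u(x,t) > 0 everywhere and let λ ∈ ℝ with λ ≠ 0. Suppose ψ : ℝ² → ℝ is smooth and satisfies, at every point (x,t), both ψ_{xxx} = −λ·u·ψ and ψ_t = λ·( −6·u^{-2/3}·ψ_{xx} + 3·(u^{-2/3})_x·ψ_x − (u^{-2/3})_{xx}·ψ ). Then ψ·( u_t − ∂⁵_x(u^{-2/3}) ) = 0 at every point; in particular, at every point where ψ ≠ 0, u satisfies the fifth-order equation u_t = ∂⁵_x( u^{-2/3} ). -/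
open scoped ContDiff

/-! Auxiliary framework: partial derivatives of functions `ℝ → ℝ → ℝ`. -/

noncomputable def Dx (f : ℝ → ℝ → ℝ) : ℝ → ℝ → ℝ := fun x t => deriv (fun y => f y t) x
noncomputable def Dt (f : ℝ → ℝ → ℝ) : ℝ → ℝ → ℝ := fun x t => deriv (fun s => f x s) t

/-- Smoothness of a two-variable real function. -/
def Sm (f : ℝ → ℝ → ℝ) : Prop := ContDiff ℝ ∞ (fun p : ℝ × ℝ => f p.1 p.2)

private lemma one_le_inf : (1 : WithTop ℕ∞) ≤ ∞ := by exact_mod_cast le_top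
private lemma two_le_inf : (2 : WithTop ℕ∞) ≤ ∞ := by
  rw [show (2 : WithTop ℕ∞) = ((2 : ℕ∞) : WithTop ℕ∞) by rfl]; exact_mod_cast le_top
private lemma inf_add_one_le : ∞ + 1 ≤ ∞ := by exact_mod_cast le_top

namespace Sm
variable {f g : ℝ → ℝ → ℝ}

theorem contDiff (hf : Sm f) : ContDiff ℝ ∞ (fun p : ℝ × ℝ => f p.1 p.2) := hf

theorem hasDerivAt_x (hf : Sm f) (x t : ℝ) :
    HasDerivAt (fun y => f y t) (fderiv ℝ (fun p : ℝ × ℝ => f p.1 p.2) (x, t) (1, 0)) x := by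
  have hF : HasFDerivAt (fun p : ℝ × ℝ => f p.1 p.2)
      (fderiv ℝ (fun p : ℝ × ℝ => f p.1 p.2) (x, t)) (x, t) :=
    (hf.contDiff.differentiable (by simp) (x, t)).hasFDerivAt
  exact hF.comp_hasDerivAt x ((hasDerivAt_id x).prodMk (hasDerivAt_const x t))

theorem hasDerivAt_t (hf : Sm f) (x t : ℝ) :
    HasDerivAt (fun s => f x s) (fderiv ℝ (fun p : ℝ × ℝ => f p.1 p.2) (x, t) (0, 1)) t := by
  have hF : HasFDerivAt (fun p : ℝ × ℝ => f p.1 p.2)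
      (fderiv ℝ (fun p : ℝ × ℝ => f p.1 p.2) (x, t)) (x, t) :=
    (hf.contDiff.differentiable (by simp) (x, t)).hasFDerivAt
  exact hF.comp_hasDerivAt t ((hasDerivAt_const t x).prodMk (hasDerivAt_id t))

theorem hasDerivAt_x' (hf : Sm f) (x t : ℝ) :
    HasDerivAt (fun y => f y t) (Dx f x t) x := by
  have h := hf.hasDerivAt_x x t
  rwa [show Dx f x t = _ from h.deriv]

theorem hasDerivAt_t' (hf : Sm f) (x t : ℝ) :
    HasDerivAt (fun s => f x s) (Dt f x t) t := by
  have h := hf.hasDerivAt_t x t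
  rwa [show Dt f x t = _ from h.deriv]

theorem dx_eq (hf : Sm f) (x t : ℝ) :
    Dx f x t = fderiv ℝ (fun p : ℝ × ℝ => f p.1 p.2) (x, t) (1, 0) :=
  (hf.hasDerivAt_x x t).deriv

theorem dt_eq (hf : Sm f) (x t : ℝ) :
    Dt f x t = fderiv ℝ (fun p : ℝ × ℝ => f p.1 p.2) (x, t) (0, 1) :=
  (hf.hasDerivAt_t x t).deriv

theorem dx (hf : Sm f) : Sm (Dx f) := by
  have : (fun p : ℝ × ℝ => Dx f p.1 p.2)
      = fun p : ℝ × ℝ => fderiv ℝ (fun q : ℝ × ℝ => f q.1 q.2) p ((1 : ℝ), (0 : ℝ)) := by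
    funext p; exact hf.dx_eq p.1 p.2
  show ContDiff ℝ ∞ (fun p : ℝ × ℝ => Dx f p.1 p.2)
  rw [this]
  exact (hf.contDiff.fderiv_right inf_add_one_le).clm_apply contDiff_const

theorem dt (hf : Sm f) : Sm (Dt f) := by
  have : (fun p : ℝ × ℝ => Dt f p.1 p.2)
      = fun p : ℝ × ℝ => fderiv ℝ (fun q : ℝ × ℝ => f q.1 q.2) p ((0 : ℝ), (1 : ℝ)) := by
    funext p; exact hf.dt_eq p.1 p.2
  show ContDiff ℝ ∞ (fun p : ℝ × ℝ => Dt f p.1 p.2)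
  rw [this]
  exact (hf.contDiff.fderiv_right inf_add_one_le).clm_apply contDiff_const

theorem fderiv_apply_dir (hf : Sm f) (x t : ℝ) (v w : ℝ × ℝ) :
    fderiv ℝ (fun p : ℝ × ℝ => fderiv ℝ (fun q : ℝ × ℝ => f q.1 q.2) p v) (x, t) w
      = fderiv ℝ (fderiv ℝ (fun q : ℝ × ℝ => f q.1 q.2)) (x, t) w v := by
  have hd : DifferentiableAt ℝ (fderiv ℝ (fun q : ℝ × ℝ => f q.1 q.2)) (x, t) :=
    ((hf.contDiff.fderiv_right inf_add_one_le).differentiable (by simp)) (x, t)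
  rw [fderiv_clm_apply hd (differentiableAt_const v)]
  simp

/-- Clairaut / Schwarz: mixed partial derivatives of a smooth function commute. -/
theorem clairaut (hf : Sm f) (x t : ℝ) : Dt (Dx f) x t = Dx (Dt f) x t := by
  have h1 : Dt (Dx f) x t
      = fderiv ℝ (fderiv ℝ (fun q : ℝ × ℝ => f q.1 q.2)) (x, t) (0, 1) (1, 0) := by
    rw [(hf.dx).dt_eq x t]
    have : (fun p : ℝ × ℝ => Dx f p.1 p.2)
        = fun p : ℝ × ℝ => fderiv ℝ (fun q : ℝ × ℝ => f q.1 q.2) p ((1:ℝ), (0:ℝ)) := by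
      funext p; exact hf.dx_eq p.1 p.2
    rw [this, hf.fderiv_apply_dir]
  have h2 : Dx (Dt f) x t
      = fderiv ℝ (fderiv ℝ (fun q : ℝ × ℝ => f q.1 q.2)) (x, t) (1, 0) (0, 1) := by
    rw [(hf.dt).dx_eq x t]
    have : (fun p : ℝ × ℝ => Dt f p.1 p.2)
        = fun p : ℝ × ℝ => fderiv ℝ (fun q : ℝ × ℝ => f q.1 q.2) p ((0:ℝ), (1:ℝ)) := by
      funext p; exact hf.dt_eq p.1 p.2
    rw [this, hf.fderiv_apply_dir]
  rw [h1, h2]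
  exact (hf.contDiff.contDiffAt.isSymmSndFDerivAt (by simpa [minSmoothness_of_isRCLikeNormedField] using two_le_inf)) _ _

end Sm

theorem dx_congr {f g : ℝ → ℝ → ℝ} (h : ∀ x t, f x t = g x t) (x t : ℝ) :
    Dx f x t = Dx g x t := by
  have hfg : f = g := funext fun a => funext fun b => h a b
  rw [hfg]

theorem dt_congr {f g : ℝ → ℝ → ℝ} (h : ∀ x t, f x t = g x t) (x t : ℝ) :
    Dt f x t = Dt g x t := by
  have hfg : f = g := funext fun a => funext fun b => h a b
  rw [hfg]

theorem iterN (f : ℝ → ℝ → ℝ) (t : ℝ) :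
    ∀ n, iteratedDeriv n (fun y => f y t) = fun x => (Dx^[n] f) x t := by
  intro n
  induction n with
  | zero => simp
  | succ n ih =>
    funext x
    rw [iteratedDeriv_succ, ih, Function.iterate_succ_apply']
    rfl

theorem iter2 (f : ℝ → ℝ → ℝ) (t x : ℝ) :
    iteratedDeriv 2 (fun y => f y t) x = Dx (Dx f) x t := by rw [iterN f t 2]; rfl

theorem iter3_s7 (f : ℝ → ℝ → ℝ) (t x : ℝ) :
    iteratedDeriv 3 (fun y => f y t) x = Dx (Dx (Dx f)) x t := by rw [iterN f t 3]; rfl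

theorem iter5 (f : ℝ → ℝ → ℝ) (t x : ℝ) :
    iteratedDeriv 5 (fun y => f y t) x = Dx (Dx (Dx (Dx (Dx f)))) x t := by rw [iterN f t 5]; rfl

/-- Core computation for the Lax pair of `u_t = ∂⁵ₓ(u^{-2/3})`, with the abstract
potential `V` satisfying `u² V³ = 1`. -/
theorem lax_core (u ψ V : ℝ → ℝ → ℝ)
    (hSu : Sm u) (hSψ : Sm ψ) (hSV : Sm V)
    (hupos : ∀ x t, 0 < u x t) (hVpos : ∀ x t, 0 < V x t)
    (hUV : ∀ x t, u x t * u x t * (V x t * (V x t * V x t)) = 1)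
    (lam : ℝ)
    (hx3 : ∀ x t, Dx (Dx (Dx ψ)) x t = -lam * u x t * ψ x t)
    (hT : ∀ x t, Dt ψ x t
      = lam * (-6 * V x t * Dx (Dx ψ) x t + 3 * Dx V x t * Dx ψ x t - Dx (Dx V) x t * ψ x t)) :
    ∀ x t, lam * (ψ x t * (Dt u x t - Dx (Dx (Dx (Dx (Dx V)))) x t)) = 0 := by
  -- derivative of the algebraic relation u²V³ = 1
  have hUVx : ∀ x t,
      (Dx u x t * u x t + u x t * Dx u x t) * (V x t * (V x t * V x t))
        + u x t * u x t * (Dx V x t * (V x t * V x t)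
            + V x t * (Dx V x t * V x t + V x t * Dx V x t)) = 0 := by
    intro x t
    have H : HasDerivAt (fun y => u y t * u y t * (V y t * (V y t * V y t)))
        ((Dx u x t * u x t + u x t * Dx u x t) * (V x t * (V x t * V x t))
          + u x t * u x t * (Dx V x t * (V x t * V x t)
              + V x t * (Dx V x t * V x t + V x t * Dx V x t))) x :=
      ((hSu.hasDerivAt_x' x t).mul (hSu.hasDerivAt_x' x t)).mul
        ((hSV.hasDerivAt_x' x t).mul ((hSV.hasDerivAt_x' x t).mul (hSV.hasDerivAt_x' x t)))
    calc _ = Dx (fun a b => u a b * u a b * (V a b * (V a b * V a b))) x t := H.deriv.symm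
    _ = Dx (fun _ _ => (1:ℝ)) x t := dx_congr hUV x t
    _ = 0 := (hasDerivAt_const x (1:ℝ)).deriv
  -- first differential consequence: 2 u_x V + 3 u V_x = 0
  have hc1 : ∀ x t, 2 * Dx u x t * V x t + 3 * u x t * Dx V x t = 0 := by
    intro x t
    have hfac : u x t * (V x t * V x t)
        * (2 * Dx u x t * V x t + 3 * u x t * Dx V x t) = 0 := by
      linear_combination hUVx x t
    exact (mul_eq_zero.mp hfac).resolve_left
      (ne_of_gt (mul_pos (hupos x t) (mul_pos (hVpos x t) (hVpos x t))))
  -- second differential consequence: 2 u_xx V + 5 u_x V_x + 3 u V_xx = 0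
  have hc2 : ∀ x t, 2 * Dx (Dx u) x t * V x t + 5 * Dx u x t * Dx V x t
      + 3 * u x t * Dx (Dx V) x t = 0 := by
    intro x t
    have H : HasDerivAt (fun y => 2 * Dx u y t * V y t + 3 * u y t * Dx V y t)
        ((2 * Dx (Dx u) x t * V x t + (2 * Dx u x t) * Dx V x t)
          + ((3 * Dx u x t) * Dx V x t + (3 * u x t) * Dx (Dx V) x t)) x :=
      ((((hSu.dx).hasDerivAt_x' x t).const_mul 2).mul (hSV.hasDerivAt_x' x t)).add
        (((hSu.hasDerivAt_x' x t).const_mul 3).mul ((hSV.dx).hasDerivAt_x' x t))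
    have hz : (2 * Dx (Dx u) x t * V x t + (2 * Dx u x t) * Dx V x t)
        + ((3 * Dx u x t) * Dx V x t + (3 * u x t) * Dx (Dx V) x t) = 0 :=
      H.deriv.symm.trans ((dx_congr hc1 x t).trans ((hasDerivAt_const x (0:ℝ)).deriv))
    linear_combination hz
  -- fourth and fifth x-derivatives of ψ
  have hx4 : ∀ x t, Dx (Dx (Dx (Dx ψ))) x t
      = -lam * (Dx u x t * ψ x t + u x t * Dx ψ x t) := by
    intro x t
    have H : HasDerivAt (fun y => -lam * u y t * ψ y t)
        ((-lam * Dx u x t) * ψ x t + (-lam * u x t) * Dx ψ x t) x :=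
      ((hSu.hasDerivAt_x' x t).const_mul (-lam)).mul (hSψ.hasDerivAt_x' x t)
    exact (dx_congr hx3 x t).trans (H.deriv.trans (by ring))
  have hx5 : ∀ x t, Dx (Dx (Dx (Dx (Dx ψ)))) x t
      = -lam * (Dx (Dx u) x t * ψ x t + 2 * Dx u x t * Dx ψ x t
          + u x t * Dx (Dx ψ) x t) := by
    intro x t
    have H : HasDerivAt
        (fun y => -lam * (Dx u y t * ψ y t + u y t * Dx ψ y t))
        (-lam * ((Dx (Dx u) x t * ψ x t + Dx u x t * Dx ψ x t)
          + (Dx u x t * Dx ψ x t + u x t * Dx (Dx ψ) x t))) x :=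
      ((((hSu.dx).hasDerivAt_x' x t).mul (hSψ.hasDerivAt_x' x t)).add
        ((hSu.hasDerivAt_x' x t).mul ((hSψ.dx).hasDerivAt_x' x t))).const_mul (-lam)
    exact (dx_congr hx4 x t).trans (H.deriv.trans (by ring))
  -- x-derivatives of the time evolution equation
  have hT1 : ∀ x t, Dx (Dt ψ) x t
      = lam * (-6 * V x t * Dx (Dx (Dx ψ)) x t - 3 * Dx V x t * Dx (Dx ψ) x t
          + 2 * Dx (Dx V) x t * Dx ψ x t - Dx (Dx (Dx V)) x t * ψ x t) := by
    intro x t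
    have H : HasDerivAt
        (fun y => lam * (-6 * V y t * Dx (Dx ψ) y t + 3 * Dx V y t * Dx ψ y t
            - Dx (Dx V) y t * ψ y t))
        (lam * ((((-6 * Dx V x t) * Dx (Dx ψ) x t + (-6 * V x t) * Dx (Dx (Dx ψ)) x t)
            + ((3 * Dx (Dx V) x t) * Dx ψ x t + (3 * Dx V x t) * Dx (Dx ψ) x t))
            - (Dx (Dx (Dx V)) x t * ψ x t + Dx (Dx V) x t * Dx ψ x t))) x :=
      (((((hSV.hasDerivAt_x' x t).const_mul (-6)).mul ((hSψ.dx.dx).hasDerivAt_x' x t)).add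
        ((((hSV.dx).hasDerivAt_x' x t).const_mul 3).mul ((hSψ.dx).hasDerivAt_x' x t))).sub
        (((hSV.dx.dx).hasDerivAt_x' x t).mul (hSψ.hasDerivAt_x' x t))).const_mul lam
    exact (dx_congr hT x t).trans (H.deriv.trans (by ring))
  have hT2 : ∀ x t, Dx (Dx (Dt ψ)) x t
      = lam * (-6 * V x t * Dx (Dx (Dx (Dx ψ))) x t
          - 9 * Dx V x t * Dx (Dx (Dx ψ)) x t
          - Dx (Dx V) x t * Dx (Dx ψ) x t
          + Dx (Dx (Dx V)) x t * Dx ψ x t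
          - Dx (Dx (Dx (Dx V))) x t * ψ x t) := by
    intro x t
    have H : HasDerivAt
        (fun y => lam * (-6 * V y t * Dx (Dx (Dx ψ)) y t - 3 * Dx V y t * Dx (Dx ψ) y t
            + 2 * Dx (Dx V) y t * Dx ψ y t - Dx (Dx (Dx V)) y t * ψ y t))
        (lam * (((((-6 * Dx V x t) * Dx (Dx (Dx ψ)) x t
              + (-6 * V x t) * Dx (Dx (Dx (Dx ψ))) x t)
            - ((3 * Dx (Dx V) x t) * Dx (Dx ψ) x t
              + (3 * Dx V x t) * Dx (Dx (Dx ψ)) x t))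
            + ((2 * Dx (Dx (Dx V)) x t) * Dx ψ x t
              + (2 * Dx (Dx V) x t) * Dx (Dx ψ) x t))
            - (Dx (Dx (Dx (Dx V))) x t * ψ x t + Dx (Dx (Dx V)) x t * Dx ψ x t))) x :=
      ((((((hSV.hasDerivAt_x' x t).const_mul (-6)).mul ((hSψ.dx.dx.dx).hasDerivAt_x' x t)).sub
        ((((hSV.dx).hasDerivAt_x' x t).const_mul 3).mul ((hSψ.dx.dx).hasDerivAt_x' x t))).add
        ((((hSV.dx.dx).hasDerivAt_x' x t).const_mul 2).mul ((hSψ.dx).hasDerivAt_x' x t))).sub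
        (((hSV.dx.dx.dx).hasDerivAt_x' x t).mul (hSψ.hasDerivAt_x' x t))).const_mul lam
    exact (dx_congr hT1 x t).trans (H.deriv.trans (by ring))
  have hT3 : ∀ x t, Dx (Dx (Dx (Dt ψ))) x t
      = lam * (-6 * V x t * Dx (Dx (Dx (Dx (Dx ψ)))) x t
          - 15 * Dx V x t * Dx (Dx (Dx (Dx ψ))) x t
          - 10 * Dx (Dx V) x t * Dx (Dx (Dx ψ)) x t
          - Dx (Dx (Dx (Dx (Dx V)))) x t * ψ x t) := by
    intro x t
    have H : HasDerivAt
        (fun y => lam * (-6 * V y t * Dx (Dx (Dx (Dx ψ))) y t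
            - 9 * Dx V y t * Dx (Dx (Dx ψ)) y t
            - Dx (Dx V) y t * Dx (Dx ψ) y t
            + Dx (Dx (Dx V)) y t * Dx ψ y t
            - Dx (Dx (Dx (Dx V))) y t * ψ y t))
        (lam * ((((((-6 * Dx V x t) * Dx (Dx (Dx (Dx ψ))) x t
              + (-6 * V x t) * Dx (Dx (Dx (Dx (Dx ψ)))) x t)
            - ((9 * Dx (Dx V) x t) * Dx (Dx (Dx ψ)) x t
              + (9 * Dx V x t) * Dx (Dx (Dx (Dx ψ))) x t))
            - (Dx (Dx (Dx V)) x t * Dx (Dx ψ) x t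
              + Dx (Dx V) x t * Dx (Dx (Dx ψ)) x t))
            + (Dx (Dx (Dx (Dx V))) x t * Dx ψ x t
              + Dx (Dx (Dx V)) x t * Dx (Dx ψ) x t))
            - (Dx (Dx (Dx (Dx (Dx V)))) x t * ψ x t
              + Dx (Dx (Dx (Dx V))) x t * Dx ψ x t))) x :=
      (((((((hSV.hasDerivAt_x' x t).const_mul (-6)).mul
            ((hSψ.dx.dx.dx.dx).hasDerivAt_x' x t)).sub
        ((((hSV.dx).hasDerivAt_x' x t).const_mul 9).mul ((hSψ.dx.dx.dx).hasDerivAt_x' x t))).sub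
        (((hSV.dx.dx).hasDerivAt_x' x t).mul ((hSψ.dx.dx).hasDerivAt_x' x t))).add
        (((hSV.dx.dx.dx).hasDerivAt_x' x t).mul ((hSψ.dx).hasDerivAt_x' x t))).sub
        (((hSV.dx.dx.dx.dx).hasDerivAt_x' x t).mul (hSψ.hasDerivAt_x' x t))).const_mul lam
    exact (dx_congr hT2 x t).trans (H.deriv.trans (by ring))
  -- the t-derivative of ψ_xxx via the Lax equation
  have hL : ∀ x t, Dt (Dx (Dx (Dx ψ))) x t
      = (-lam * Dt u x t) * ψ x t + (-lam * u x t) * Dt ψ x t := by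
    intro x t
    have H : HasDerivAt (fun s => -lam * u x s * ψ x s)
        ((-lam * Dt u x t) * ψ x t + (-lam * u x t) * Dt ψ x t) t :=
      ((hSu.hasDerivAt_t' x t).const_mul (-lam)).mul (hSψ.hasDerivAt_t' x t)
    exact (dt_congr hx3 x t).trans H.deriv
  -- equality of mixed partials
  have hmix : ∀ x t, Dt (Dx (Dx (Dx ψ))) x t = Dx (Dx (Dx (Dt ψ))) x t := by
    intro x t
    calc Dt (Dx (Dx (Dx ψ))) x t = Dx (Dt (Dx (Dx ψ))) x t := (hSψ.dx.dx).clairaut x t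
    _ = Dx (Dx (Dt (Dx ψ))) x t := dx_congr (fun a b => (hSψ.dx).clairaut a b) x t
    _ = Dx (Dx (Dx (Dt ψ))) x t :=
        dx_congr (fun a b => dx_congr (fun c d => hSψ.clairaut c d) a b) x t
  -- final assembly
  intro x t
  have hfin : (-lam * Dt u x t) * ψ x t + (-lam * u x t) * Dt ψ x t
      = lam * (-6 * V x t * Dx (Dx (Dx (Dx (Dx ψ)))) x t
          - 15 * Dx V x t * Dx (Dx (Dx (Dx ψ))) x t
          - 10 * Dx (Dx V) x t * Dx (Dx (Dx ψ)) x t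
          - Dx (Dx (Dx (Dx (Dx V)))) x t * ψ x t) :=
    (hL x t).symm.trans ((hmix x t).trans (hT3 x t))
  linear_combination (-1 : ℝ) * hfin + (-lam * u x t) * hT x t
    + (10 * lam * Dx (Dx V) x t) * hx3 x t
    + (15 * lam * Dx V x t) * hx4 x t
    + (6 * lam * V x t) * hx5 x t
    + (-6 * lam ^ 2 * Dx ψ x t) * hc1 x t
    + (-3 * lam ^ 2 * ψ x t) * hc2 x t

/-- if a smooth `ψ` satisfies the scalar Lax pair
`ψ_{xxx} = -λuψ`, `ψ_t = λ(-6u^{-2/3}ψ_{xx} + 3(u^{-2/3})_x ψ_x - (u^{-2/3})_{xx} ψ)`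
everywhere, then `ψ·(u_t - ∂⁵ₓ(u^{-2/3})) = 0` everywhere; in particular, where `ψ ≠ 0`,
`u` solves the fifth-order equation `u_t = ∂⁵ₓ(u^{-2/3})`. -/
theorem stmt_7 (u ψ : ℝ → ℝ → ℝ)
    (hu : ContDiff ℝ (⊤ : ℕ∞) (fun p : ℝ × ℝ => u p.1 p.2))
    (hpos : ∀ x t, 0 < u x t)
    (lam : ℝ) (hlam : lam ≠ 0)
    (hψ : ContDiff ℝ (⊤ : ℕ∞) (fun p : ℝ × ℝ => ψ p.1 p.2))
    (hx : ∀ x t, iteratedDeriv 3 (fun y => ψ y t) x = -lam * u x t * ψ x t)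
    (ht : ∀ x t, deriv (fun s => ψ x s) t
      = lam * (-6 * u x t ^ (-(2:ℝ)/3) * iteratedDeriv 2 (fun y => ψ y t) x
          + 3 * deriv (fun y => u y t ^ (-(2:ℝ)/3)) x * deriv (fun y => ψ y t) x
          - iteratedDeriv 2 (fun y => u y t ^ (-(2:ℝ)/3)) x * ψ x t)) :
    (∀ x t, ψ x t * (deriv (fun s => u x s) t
        - iteratedDeriv 5 (fun y => u y t ^ (-(2:ℝ)/3)) x) = 0)
    ∧
    (∀ x t, ψ x t ≠ 0 → deriv (fun s => u x s) t
        = iteratedDeriv 5 (fun y => u y t ^ (-(2:ℝ)/3)) x) := by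
  have hSu : Sm u := hu.of_le (by simp)
  have hSψ : Sm ψ := hψ.of_le (by simp)
  have hSV : Sm (fun a b => u a b ^ (-(2:ℝ)/3)) :=
    contDiff_iff_contDiffAt.mpr fun p =>
      by have h := (Real.contDiffAt_rpow_const_of_ne (p := -(2:ℝ)/3) (ne_of_gt (hpos p.1 p.2))).comp p hSu.contDiff.contDiffAt; exact h
  have hVpos : ∀ x t, 0 < (fun a b => u a b ^ (-(2:ℝ)/3)) x t := fun x t =>
    Real.rpow_pos_of_pos (hpos x t) _
  have hUV : ∀ x t, u x t * u x t
      * ((fun a b => u a b ^ (-(2:ℝ)/3)) x t * ((fun a b => u a b ^ (-(2:ℝ)/3)) x t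
          * (fun a b => u a b ^ (-(2:ℝ)/3)) x t)) = 1 := by
    intro x t
    have h := hpos x t
    show u x t * u x t * (u x t ^ (-(2:ℝ)/3) * (u x t ^ (-(2:ℝ)/3) * u x t ^ (-(2:ℝ)/3))) = 1
    rw [← Real.rpow_add h, ← Real.rpow_add h,
      show (-(2:ℝ)/3 + (-(2:ℝ)/3 + -(2:ℝ)/3)) = -((2:ℕ):ℝ) by norm_num,
      Real.rpow_neg h.le, Real.rpow_natCast]
    field_simp
  have hx3 : ∀ x t, Dx (Dx (Dx ψ)) x t = -lam * u x t * ψ x t := fun x t =>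
    (iter3_s7 ψ t x).symm.trans (hx x t)
  have hT : ∀ x t, Dt ψ x t
      = lam * (-6 * (fun a b => u a b ^ (-(2:ℝ)/3)) x t * Dx (Dx ψ) x t
          + 3 * Dx (fun a b => u a b ^ (-(2:ℝ)/3)) x t * Dx ψ x t
          - Dx (Dx (fun a b => u a b ^ (-(2:ℝ)/3))) x t * ψ x t) := by
    intro x t
    have h := ht x t
    rw [iter2 ψ t x,
      show iteratedDeriv 2 (fun y => u y t ^ (-(2:ℝ)/3)) x
        = Dx (Dx (fun a b => u a b ^ (-(2:ℝ)/3))) x t from iter2 (fun a b => u a b ^ (-(2:ℝ)/3)) t x] at h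
    exact h
  have main := lax_core u ψ (fun a b => u a b ^ (-(2:ℝ)/3)) hSu hSψ hSV hpos hVpos hUV lam hx3 hT
  have key : ∀ x t, ψ x t * (deriv (fun s => u x s) t
      - iteratedDeriv 5 (fun y => u y t ^ (-(2:ℝ)/3)) x) = 0 := by
    intro x t
    rw [show iteratedDeriv 5 (fun y => u y t ^ (-(2:ℝ)/3)) x
      = Dx (Dx (Dx (Dx (Dx (fun a b => u a b ^ (-(2:ℝ)/3)))))) x t from iter5 (fun a b => u a b ^ (-(2:ℝ)/3)) t x]
    exact (mul_eq_zero.mp (main x t)).resolve_left hlam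
  refine ⟨key, fun x t hne => ?_⟩
  have h := key x t
  have h2 := (mul_eq_zero.mp h).resolve_left hne
  linarith [h2]
end

section
/- Fix N ≥ 1 and λ₁,…,λ_N ∈ ℝ, and let Λ = diag(λ₁,…,λ_N). On the open subset of ℝ^{6N} = {(q₁,q₂,q₃,p₁,p₂,p₃) : qᵢ,pᵢ ∈ ℝ^N} where ⟨Λq₁,p₃⟩ > 0, define H⁺ = ⟨q₂,p₁⟩ + ⟨q₃,p₂⟩ + 2·⟨Λq₁,p₃⟩^{-1/2}. Then the partial gradients of H⁺ satisfy: ∂H⁺/∂p₁ = q₂, ∂H⁺/∂p₂ = q₃, ∂H⁺/∂p₃ = −⟨Λq₁,p₃⟩^{-3/2}·Λq₁, ∂H⁺/∂q₁ = −⟨Λq₁,p₃⟩^{-3/2}·Λp₃, ∂H⁺/∂q₂ = p₁, ∂H⁺/∂q₃ = p₂. Consequently the constrained nonlinearized spectral problem q₁' = q₂, q₂' = q₃, q₃' = −uΛq₁, p₁' = uΛp₃, p₂' = −p₁, p₃' = −p₂ with u = ⟨Λq₁,p₃⟩^{-3/2} coincides exactly with Hamilton's canonical equations q' = ∂H⁺/∂p,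 p' = −∂H⁺/∂q. -/
open Finset in
/-- The Hamiltonian `H⁺ = ⟨q₂,p₁⟩ + ⟨q₃,p₂⟩ + 2⟨Λq₁,p₃⟩^{-1/2}` on ℝ^{6N}. -/
noncomputable def Hplus (N : ℕ) (l : Fin N → ℝ)
    (q1 q2 q3 p1 p2 p3 : Fin N → ℝ) : ℝ :=
  (∑ j, q2 j * p1 j) + (∑ j, q3 j * p2 j)
    + 2 * (∑ j, l j * q1 j * p3 j) ^ (-(1:ℝ)/2)

open Finset

lemma key_sum {N : ℕ} (g f : Fin N → ℝ) (i : Fin N) (s : ℝ) :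
    ∑ j, g j * Function.update f i s j
      = g i * s + ∑ j ∈ Finset.univ.erase i, g j * f j := by
  rw [← Finset.add_sum_erase _ (fun j => g j * Function.update f i s j)
      (Finset.mem_univ i)]
  congr 1
  · simp
  · exact Finset.sum_congr rfl fun j hj => by
      rw [Function.update_of_ne (Finset.ne_of_mem_erase hj)]

lemma key_sum2 {N : ℕ} (a b f : Fin N → ℝ) (i : Fin N) (s : ℝ) :
    ∑ j, a j * Function.update f i s j * b j
      = (a i * b i) * s + ∑ j ∈ Finset.univ.erase i, a j * f j * b j := by
  rw [← Finset.add_sum_erase _ (fun j => a j * Function.update f i s j * b j)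
      (Finset.mem_univ i)]
  congr 1
  · simp; ring
  · exact Finset.sum_congr rfl fun j hj => by
      rw [Function.update_of_ne (Finset.ne_of_mem_erase hj)]

lemma key_sum3 {N : ℕ} (b f : Fin N → ℝ) (i : Fin N) (s : ℝ) :
    ∑ j, Function.update f i s j * b j
      = b i * s + ∑ j ∈ Finset.univ.erase i, f j * b j := by
  rw [← Finset.add_sum_erase _ (fun j => Function.update f i s j * b j)
      (Finset.mem_univ i)]
  congr 1
  · simp; ring
  · exact Finset.sum_congr rfl fun j hj => by
      rw [Function.update_of_ne (Finset.ne_of_mem_erase hj)]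

lemma lin_hasDeriv (c C : ℝ) (x : ℝ) : HasDerivAt (fun s => c * s + C) c x := by
  simpa using ((hasDerivAt_id x).const_mul c).add_const C

lemma rpow_part_deriv (c A x : ℝ) (h : 0 < c * x + A) (K : ℝ) :
    deriv (fun s => K + 2 * (c * s + A) ^ (-(1:ℝ)/2)) x
      = -((c * x + A) ^ (-(3:ℝ)/2)) * c := by
  have inner : HasDerivAt (fun s => c * s + A) c x := lin_hasDeriv c A x
  have hr : HasDerivAt (fun y : ℝ => y ^ (-(1:ℝ)/2))
      ((-(1:ℝ)/2) * (c * x + A) ^ ((-(1:ℝ)/2) - 1)) (c * x + A) :=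
    Real.hasDerivAt_rpow_const (Or.inl h.ne')
  have h2 : HasDerivAt (fun s => K + 2 * (c * s + A) ^ (-(1:ℝ)/2))
      (2 * ((-(1:ℝ)/2) * (c * x + A) ^ ((-(1:ℝ)/2) - 1) * c)) x := by
    simpa [Function.comp] using ((hr.comp x inner).const_mul 2).const_add K
  rw [h2.deriv, show (-(1:ℝ)/2) - 1 = -(3:ℝ)/2 by norm_num]
  ring

section partials
variable {N : ℕ} (l q1 q2 q3 p1 p2 p3 : Fin N → ℝ)

lemma dHp1 (j : Fin N) :
    deriv (fun s => Hplus N l q1 q2 q3 (Function.update p1 j s) p2 p3) (p1 j) = q2 j := by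
  simp only [Hplus, key_sum]
  exact ((((lin_hasDeriv _ _ _).add_const _).add_const _)).deriv

lemma dHp2 (j : Fin N) :
    deriv (fun s => Hplus N l q1 q2 q3 p1 (Function.update p2 j s) p3) (p2 j) = q3 j := by
  simp only [Hplus, key_sum]
  exact (((lin_hasDeriv _ _ _).const_add _).add_const _).deriv

lemma dHp3 (h : 0 < ∑ i, l i * q1 i * p3 i) (j : Fin N) :
    deriv (fun s => Hplus N l q1 q2 q3 p1 p2 (Function.update p3 j s)) (p3 j)
      = -((∑ i, l i * q1 i * p3 i) ^ (-(3:ℝ)/2)) * (l j * q1 j) := by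
  have hA : (∑ i, l i * q1 i * p3 i)
      = (l j * q1 j) * p3 j + ∑ i ∈ Finset.univ.erase j, l i * q1 i * p3 i := by
    have := key_sum (fun i => l i * q1 i) p3 j (p3 j)
    rw [Function.update_eq_self] at this
    rw [this]
  simp only [Hplus, key_sum]
  rw [show (fun s => (∑ i, q2 i * p1 i) + (∑ i, q3 i * p2 i)
        + 2 * ((l j * q1 j) * s + ∑ i ∈ Finset.univ.erase j, l i * q1 i * p3 i) ^ (-(1:ℝ)/2))
      = (fun s => ((∑ i, q2 i * p1 i) + (∑ i, q3 i * p2 i))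
        + 2 * ((l j * q1 j) * s + ∑ i ∈ Finset.univ.erase j, l i * q1 i * p3 i) ^ (-(1:ℝ)/2))
      from rfl]
  rw [rpow_part_deriv _ _ _ (by rw [← hA]; exact h) _, ← hA]

lemma dHq1 (h : 0 < ∑ i, l i * q1 i * p3 i) (j : Fin N) :
    deriv (fun s => Hplus N l (Function.update q1 j s) q2 q3 p1 p2 p3) (q1 j)
      = -((∑ i, l i * q1 i * p3 i) ^ (-(3:ℝ)/2)) * (l j * p3 j) := by
  have hA : (∑ i, l i * q1 i * p3 i)
      = (l j * p3 j) * q1 j + ∑ i ∈ Finset.univ.erase j, l i * q1 i * p3 i := by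
    have := key_sum2 l p3 q1 j (q1 j)
    rw [Function.update_eq_self] at this
    rw [this]
  simp only [Hplus, key_sum2]
  rw [rpow_part_deriv _ _ _ (by rw [← hA]; exact h) _, ← hA]

lemma dHq2 (j : Fin N) :
    deriv (fun s => Hplus N l q1 (Function.update q2 j s) q3 p1 p2 p3) (q2 j) = p1 j := by
  simp only [Hplus, key_sum3]
  exact ((((lin_hasDeriv _ _ _).add_const _).add_const _)).deriv

lemma dHq3 (j : Fin N) :
    deriv (fun s => Hplus N l q1 q2 (Function.update q3 j s) p1 p2 p3) (q3 j) = p2 j := by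
  simp only [Hplus, key_sum3]
  exact (((lin_hasDeriv _ _ _).const_add _).add_const _).deriv

end partials

open Finset in
/-- on the region `⟨Λq₁,p₃⟩ > 0`, the partial gradients of `H⁺` are
`∂H⁺/∂p₁ = q₂`, `∂H⁺/∂p₂ = q₃`, `∂H⁺/∂p₃ = -⟨Λq₁,p₃⟩^{-3/2}Λq₁`,
`∂H⁺/∂q₁ = -⟨Λq₁,p₃⟩^{-3/2}Λp₃`, `∂H⁺/∂q₂ = p₁`, `∂H⁺/∂q₃ = p₂`;
consequently the constrained nonlinearized flow `q₁' = q₂`, `q₂' = q₃`, `q₃' = -uΛq₁`,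
`p₁' = uΛp₃`, `p₂' = -p₁`, `p₃' = -p₂` with `u = ⟨Λq₁,p₃⟩^{-3/2}` coincides exactly with
Hamilton's canonical equations `q' = ∂H⁺/∂p`, `p' = -∂H⁺/∂q`. -/
theorem stmt_8 (N : ℕ) (hN : 1 ≤ N) (l : Fin N → ℝ) :
    (∀ q1 q2 q3 p1 p2 p3 : Fin N → ℝ, 0 < ∑ j, l j * q1 j * p3 j →
      (∀ j, deriv (fun s => Hplus N l q1 q2 q3 (Function.update p1 j s) p2 p3) (p1 j)
          = q2 j) ∧
      (∀ j, deriv (fun s => Hplus N l q1 q2 q3 p1 (Function.update p2 j s) p3) (p2 j)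
          = q3 j) ∧
      (∀ j, deriv (fun s => Hplus N l q1 q2 q3 p1 p2 (Function.update p3 j s)) (p3 j)
          = -((∑ i, l i * q1 i * p3 i) ^ (-(3:ℝ)/2)) * (l j * q1 j)) ∧
      (∀ j, deriv (fun s => Hplus N l (Function.update q1 j s) q2 q3 p1 p2 p3) (q1 j)
          = -((∑ i, l i * q1 i * p3 i) ^ (-(3:ℝ)/2)) * (l j * p3 j)) ∧
      (∀ j, deriv (fun s => Hplus N l q1 (Function.update q2 j s) q3 p1 p2 p3) (q2 j)
          = p1 j) ∧
      (∀ j, deriv (fun s => Hplus N l q1 q2 (Function.update q3 j s) p1 p2 p3) (q3 j)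
          = p2 j))
    ∧
    (∀ q1 q2 q3 p1 p2 p3 : ℝ → Fin N → ℝ,
      (∀ x, 0 < ∑ j, l j * q1 x j * p3 x j) →
      (((∀ x j, deriv (fun y => q1 y j) x = q2 x j) ∧
        (∀ x j, deriv (fun y => q2 y j) x = q3 x j) ∧
        (∀ x j, deriv (fun y => q3 y j) x
          = -((∑ i, l i * q1 x i * p3 x i) ^ (-(3:ℝ)/2)) * (l j * q1 x j)) ∧
        (∀ x j, deriv (fun y => p1 y j) x
          = ((∑ i, l i * q1 x i * p3 x i) ^ (-(3:ℝ)/2)) * (l j * p3 x j)) ∧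
        (∀ x j, deriv (fun y => p2 y j) x = -(p1 x j)) ∧
        (∀ x j, deriv (fun y => p3 y j) x = -(p2 x j)))
       ↔
       ((∀ x j, deriv (fun y => q1 y j) x
          = deriv (fun s => Hplus N l (q1 x) (q2 x) (q3 x)
              (Function.update (p1 x) j s) (p2 x) (p3 x)) (p1 x j)) ∧
        (∀ x j, deriv (fun y => q2 y j) x
          = deriv (fun s => Hplus N l (q1 x) (q2 x) (q3 x)
              (p1 x) (Function.update (p2 x) j s) (p3 x)) (p2 x j)) ∧
        (∀ x j, deriv (fun y => q3 y j) x
          = deriv (fun s => Hplus N l (q1 x) (q2 x) (q3 x)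
              (p1 x) (p2 x) (Function.update (p3 x) j s)) (p3 x j)) ∧
        (∀ x j, deriv (fun y => p1 y j) x
          = -(deriv (fun s => Hplus N l (Function.update (q1 x) j s) (q2 x) (q3 x)
              (p1 x) (p2 x) (p3 x)) (q1 x j))) ∧
        (∀ x j, deriv (fun y => p2 y j) x
          = -(deriv (fun s => Hplus N l (q1 x) (Function.update (q2 x) j s) (q3 x)
              (p1 x) (p2 x) (p3 x)) (q2 x j))) ∧
        (∀ x j, deriv (fun y => p3 y j) x
          = -(deriv (fun s => Hplus N l (q1 x) (q2 x) (Function.update (q3 x) j s)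
              (p1 x) (p2 x) (p3 x)) (q3 x j)))))) := by
  constructor
  · intro q1 q2 q3 p1 p2 p3 h
    exact ⟨dHp1 l q1 q2 q3 p1 p2 p3, dHp2 l q1 q2 q3 p1 p2 p3,
      dHp3 l q1 q2 q3 p1 p2 p3 h, dHq1 l q1 q2 q3 p1 p2 p3 h,
      dHq2 l q1 q2 q3 p1 p2 p3, dHq3 l q1 q2 q3 p1 p2 p3⟩
  · intro q1 q2 q3 p1 p2 p3 hpos
    constructor
    · rintro ⟨h1, h2, h3, h4, h5, h6⟩
      refine ⟨fun x j => ?_, fun x j => ?_, fun x j => ?_,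
        fun x j => ?_, fun x j => ?_, fun x j => ?_⟩
      · rw [h1 x j, dHp1]
      · rw [h2 x j, dHp2]
      · rw [h3 x j, dHp3 _ _ _ _ _ _ _ (hpos x)]
      · rw [h4 x j, dHq1 _ _ _ _ _ _ _ (hpos x)]; ring
      · rw [h5 x j, dHq2]
      · rw [h6 x j, dHq3]
    · rintro ⟨h1, h2, h3, h4, h5, h6⟩
      refine ⟨fun x j => ?_, fun x j => ?_, fun x j => ?_,
        fun x j => ?_, fun x j => ?_, fun x j => ?_⟩
      · rw [h1 x j, dHp1]
      · rw [h2 x j, dHp2]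
      · rw [h3 x j, dHp3 _ _ _ _ _ _ _ (hpos x)]
      · rw [h4 x j, dHq1 _ _ _ _ _ _ _ (hpos x)]; ring
      · rw [h5 x j, dHq2]
      · rw [h6 x j, dHq3]
end

section
/- Fix N ≥ 1 and λ₁,…,λ_N ∈ ℝ, and let Λ = diag(λ₁,…,λ_N). Let q₁,q₂,q₃,p₁,p₂,p₃ : I → ℝ^N be smooth on an interval I with G(x) := ⟨Λq₁(x),p₃(x)⟩ > 0 for all x ∈ I, and suppose they solve the constrained x-flow: q₁' = q₂, q₂' = q₃, q₃' = −uΛq₁, p₁' = uΛp₃, p₂' = −p₁, p₃' = −p₂, where u = G^{-3/2}. Then, writing u^{-2/3} = G, the successive x-derivatives satisfy: (u^{-2/3})' = ⟨Λq₂,p₃⟩ − ⟨Λq₁,p₂⟩; (u^{-2/3})'' = ⟨Λq₃,p₃⟩ + ⟨Λq₁,p₁⟩ − 2⟨Λq₂,p₂⟩; (u^{-2/3})''' = 3(⟨Λq₂,p₁⟩ − ⟨Λq₃,p₂⟩); and (u^{-2/3})'''' = 6⟨Λq₃,p₁⟩ + 3⟨Λq₁,p₃⟩^{-3/2}(⟨Λ²q₁,p₂⟩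 + ⟨Λ²q₂,p₃⟩). -/
/-- along any solution of the constrained x-flow
`q₁' = q₂`, `q₂' = q₃`, `q₃' = -uΛq₁`, `p₁' = uΛp₃`, `p₂' = -p₁`, `p₃' = -p₂` with
`u = G^{-3/2}`, `G = ⟨Λq₁,p₃⟩ > 0`, on an open interval, the successive x-derivatives of
`u^{-2/3} = G` are given by:
`(u^{-2/3})' = ⟨Λq₂,p₃⟩ - ⟨Λq₁,p₂⟩`,
`(u^{-2/3})'' = ⟨Λq₃,p₃⟩ + ⟨Λq₁,p₁⟩ - 2⟨Λq₂,p₂⟩`,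
`(u^{-2/3})''' = 3(⟨Λq₂,p₁⟩ - ⟨Λq₃,p₂⟩)`,
`(u^{-2/3})'''' = 6⟨Λq₃,p₁⟩ + 3⟨Λq₁,p₃⟩^{-3/2}(⟨Λ²q₁,p₂⟩ + ⟨Λ²q₂,p₃⟩)`. -/
theorem stmt_11 (N : ℕ) (hN : 1 ≤ N) (l : Fin N → ℝ)
    (a b : ℝ) (q1 q2 q3 p1 p2 p3 : ℝ → Fin N → ℝ)
    (G : ℝ → ℝ) (hG : G = fun x => ∑ j, l j * q1 x j * p3 x j)
    (hpos : ∀ x ∈ Set.Ioo a b, 0 < G x)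
    (hq1 : ∀ x ∈ Set.Ioo a b, ∀ j, HasDerivAt (fun y => q1 y j) (q2 x j) x)
    (hq2 : ∀ x ∈ Set.Ioo a b, ∀ j, HasDerivAt (fun y => q2 y j) (q3 x j) x)
    (hq3 : ∀ x ∈ Set.Ioo a b, ∀ j, HasDerivAt (fun y => q3 y j)
      (-((G x ^ (-(3:ℝ)/2)) * (l j * q1 x j))) x)
    (hp1 : ∀ x ∈ Set.Ioo a b, ∀ j, HasDerivAt (fun y => p1 y j)
      ((G x ^ (-(3:ℝ)/2)) * (l j * p3 x j)) x)
    (hp2 : ∀ x ∈ Set.Ioo a b, ∀ j, HasDerivAt (fun y => p2 y j) (-(p1 x j)) x)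
    (hp3 : ∀ x ∈ Set.Ioo a b, ∀ j, HasDerivAt (fun y => p3 y j) (-(p2 x j)) x) :
    ∀ x ∈ Set.Ioo a b,
      deriv G x = (∑ j, l j * q2 x j * p3 x j) - (∑ j, l j * q1 x j * p2 x j) ∧
      iteratedDeriv 2 G x = (∑ j, l j * q3 x j * p3 x j)
        + (∑ j, l j * q1 x j * p1 x j) - 2 * (∑ j, l j * q2 x j * p2 x j) ∧
      iteratedDeriv 3 G x
        = 3 * ((∑ j, l j * q2 x j * p1 x j) - (∑ j, l j * q3 x j * p2 x j)) ∧
      iteratedDeriv 4 G x = 6 * (∑ j, l j * q3 x j * p1 x j)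
        + 3 * (∑ j, l j * q1 x j * p3 x j) ^ (-(3:ℝ)/2)
          * ((∑ j, (l j) ^ 2 * q1 x j * p2 x j) + (∑ j, (l j) ^ 2 * q2 x j * p3 x j)) := by
  have hSo : IsOpen (Set.Ioo a b) := isOpen_Ioo
  set F1 : ℝ → ℝ := fun y =>
    (∑ j, l j * q2 y j * p3 y j) - (∑ j, l j * q1 y j * p2 y j) with hF1
  set F2 : ℝ → ℝ := fun y => (∑ j, l j * q3 y j * p3 y j)
    + (∑ j, l j * q1 y j * p1 y j) - 2 * (∑ j, l j * q2 y j * p2 y j) with hF2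
  set F3 : ℝ → ℝ := fun y =>
    3 * ((∑ j, l j * q2 y j * p1 y j) - (∑ j, l j * q3 y j * p2 y j)) with hF3
  set F4 : ℝ → ℝ := fun y => 6 * (∑ j, l j * q3 y j * p1 y j)
    + 3 * (G y ^ (-(3:ℝ)/2))
      * ((∑ j, (l j) ^ 2 * q1 y j * p2 y j) + (∑ j, (l j) ^ 2 * q2 y j * p3 y j)) with hF4
  have d0 : ∀ x ∈ Set.Ioo a b, HasDerivAt G (F1 x) x := by
    intro x hx
    rw [hG]
    have h : HasDerivAt (fun y => ∑ j, l j * q1 y j * p3 y j)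
        (∑ j, (l j * q2 x j * p3 x j + (l j * q1 x j) * (-(p2 x j)))) x :=
      HasDerivAt.fun_sum fun j _ => ((hq1 x hx j).const_mul (l j)).mul (hp3 x hx j)
    convert h using 1
    simp only [hF1, ← Finset.sum_sub_distrib]
    exact Finset.sum_congr rfl fun j _ => by ring
  have d1 : ∀ x ∈ Set.Ioo a b, HasDerivAt F1 (F2 x) x := by
    intro x hx
    have hA : HasDerivAt (fun y => ∑ j, l j * q2 y j * p3 y j)
        (∑ j, (l j * q3 x j * p3 x j + (l j * q2 x j) * (-(p2 x j)))) x :=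
      HasDerivAt.fun_sum fun j _ => ((hq2 x hx j).const_mul (l j)).mul (hp3 x hx j)
    have hB : HasDerivAt (fun y => ∑ j, l j * q1 y j * p2 y j)
        (∑ j, (l j * q2 x j * p2 x j + (l j * q1 x j) * (-(p1 x j)))) x :=
      HasDerivAt.fun_sum fun j _ => ((hq1 x hx j).const_mul (l j)).mul (hp2 x hx j)
    refine (hA.fun_sub hB).congr_deriv (Eq.symm ?_)
    simp only [hF2, Finset.mul_sum, ← Finset.sum_add_distrib, ← Finset.sum_sub_distrib]
    exact Finset.sum_congr rfl fun j _ => by ring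
  have d2 : ∀ x ∈ Set.Ioo a b, HasDerivAt F2 (F3 x) x := by
    intro x hx
    have hA : HasDerivAt (fun y => ∑ j, l j * q3 y j * p3 y j)
        (∑ j, (l j * (-((G x ^ (-(3:ℝ)/2)) * (l j * q1 x j))) * p3 x j
          + (l j * q3 x j) * (-(p2 x j)))) x :=
      HasDerivAt.fun_sum fun j _ => ((hq3 x hx j).const_mul (l j)).mul (hp3 x hx j)
    have hB : HasDerivAt (fun y => ∑ j, l j * q1 y j * p1 y j)
        (∑ j, (l j * q2 x j * p1 x j
          + (l j * q1 x j) * ((G x ^ (-(3:ℝ)/2)) * (l j * p3 x j)))) x :=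
      HasDerivAt.fun_sum fun j _ => ((hq1 x hx j).const_mul (l j)).mul (hp1 x hx j)
    have hC : HasDerivAt (fun y => ∑ j, l j * q2 y j * p2 y j)
        (∑ j, (l j * q3 x j * p2 x j + (l j * q2 x j) * (-(p1 x j)))) x :=
      HasDerivAt.fun_sum fun j _ => ((hq2 x hx j).const_mul (l j)).mul (hp2 x hx j)
    refine ((hA.fun_add hB).fun_sub (hC.const_mul 2)).congr_deriv (Eq.symm ?_)
    simp only [hF3, Finset.mul_sum, ← Finset.sum_add_distrib, ← Finset.sum_sub_distrib]
    exact Finset.sum_congr rfl fun j _ => by ring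
  have d3 : ∀ x ∈ Set.Ioo a b, HasDerivAt F3 (F4 x) x := by
    intro x hx
    have hA : HasDerivAt (fun y => ∑ j, l j * q2 y j * p1 y j)
        (∑ j, (l j * q3 x j * p1 x j
          + (l j * q2 x j) * ((G x ^ (-(3:ℝ)/2)) * (l j * p3 x j)))) x :=
      HasDerivAt.fun_sum fun j _ => ((hq2 x hx j).const_mul (l j)).mul (hp1 x hx j)
    have hB : HasDerivAt (fun y => ∑ j, l j * q3 y j * p2 y j)
        (∑ j, (l j * (-((G x ^ (-(3:ℝ)/2)) * (l j * q1 x j))) * p2 x j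
          + (l j * q3 x j) * (-(p1 x j)))) x :=
      HasDerivAt.fun_sum fun j _ => ((hq3 x hx j).const_mul (l j)).mul (hp2 x hx j)
    refine ((hA.fun_sub hB).const_mul 3).congr_deriv (Eq.symm ?_)
    simp only [hF4, mul_add, Finset.mul_sum, ← Finset.sum_add_distrib,
      ← Finset.sum_sub_distrib]
    exact Finset.sum_congr rfl fun j _ => by ring
  intro x hx
  have hmem : Set.Ioo a b ∈ nhds x := hSo.mem_nhds hx
  have e1 : ∀ y ∈ Set.Ioo a b, deriv G y = F1 y := fun y hy => (d0 y hy).deriv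
  have i2 : ∀ y ∈ Set.Ioo a b, iteratedDeriv 2 G y = F2 y := by
    intro y hy
    have hmy : Set.Ioo a b ∈ nhds y := hSo.mem_nhds hy
    have : deriv G =ᶠ[nhds y] F1 := Filter.eventuallyEq_of_mem hmy e1
    rw [show (2:ℕ) = 1 + 1 from rfl, iteratedDeriv_succ, iteratedDeriv_one,
      this.deriv_eq, (d1 y hy).deriv]
  have i3 : ∀ y ∈ Set.Ioo a b, iteratedDeriv 3 G y = F3 y := by
    intro y hy
    have hmy : Set.Ioo a b ∈ nhds y := hSo.mem_nhds hy
    have : iteratedDeriv 2 G =ᶠ[nhds y] F2 := Filter.eventuallyEq_of_mem hmy i2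
    rw [show (3:ℕ) = 2 + 1 from rfl, iteratedDeriv_succ, this.deriv_eq, (d2 y hy).deriv]
  have i4 : iteratedDeriv 4 G x = F4 x := by
    have : iteratedDeriv 3 G =ᶠ[nhds x] F3 := Filter.eventuallyEq_of_mem hmem i3
    rw [show (4:ℕ) = 3 + 1 from rfl, iteratedDeriv_succ, this.deriv_eq, (d3 x hx).deriv]
  refine ⟨e1 x hx, i2 x hx, i3 x hx, ?_⟩
  rw [i4, hF4]
  simp only [hG]
end

section
/- Fix N ≥ 1 and λ₁,…,λ_N ∈ ℝ, and let Λ = diag(λ₁,…,λ_N). Let q₁,q₂,q₃,p₁,p₂,p₃ : I → ℝ^N be smooth on an interval I with ⟨Λq₁(x),p₃(x)⟩ > 0 for all x ∈ I, and suppose they solve the constrained x-flow: q₁' = q₂, q₂' = q₃, q₃' = −uΛq₁, p₁' = uΛp₃, p₂' = −p₁, p₃' = −p₂, where u = ⟨Λq₁,p₃⟩^{-3/2}. Then the fifth x-derivative of u^{-2/3} = ⟨Λq₁,p₃⟩ satisfies ∂⁵_x(u^{-2/3}) = 9u·( ⟨Λ²q₃,p₃⟩ − ⟨Λ²q₁,p₁⟩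 ) + 3u_x·( ⟨Λ²q₁,p₂⟩ + ⟨Λ²q₂,p₃⟩ ), where u_x denotes the x-derivative of u = ⟨Λq₁,p₃⟩^{-3/2}. -/
/-- along any solution of the constrained x-flow
`q₁' = q₂`, `q₂' = q₃`, `q₃' = -uΛq₁`, `p₁' = uΛp₃`, `p₂' = -p₁`, `p₃' = -p₂` with
`u = ⟨Λq₁,p₃⟩^{-3/2} > 0` on an open interval, the fifth x-derivative of
`u^{-2/3} = ⟨Λq₁,p₃⟩` satisfies
`∂⁵ₓ(u^{-2/3}) = 9u(⟨Λ²q₃,p₃⟩ - ⟨Λ²q₁,p₁⟩) + 3uₓ(⟨Λ²q₁,p₂⟩ + ⟨Λ²q₂,p₃⟩)`. -/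
theorem stmt_12 (N : ℕ) (hN : 1 ≤ N) (l : Fin N → ℝ)
    (a b : ℝ) (q1 q2 q3 p1 p2 p3 : ℝ → Fin N → ℝ)
    (G u : ℝ → ℝ) (hG : G = fun x => ∑ j, l j * q1 x j * p3 x j)
    (hu : u = fun x => G x ^ (-(3:ℝ)/2))
    (hpos : ∀ x ∈ Set.Ioo a b, 0 < G x)
    (hq1 : ∀ x ∈ Set.Ioo a b, ∀ j, HasDerivAt (fun y => q1 y j) (q2 x j) x)
    (hq2 : ∀ x ∈ Set.Ioo a b, ∀ j, HasDerivAt (fun y => q2 y j) (q3 x j) x)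
    (hq3 : ∀ x ∈ Set.Ioo a b, ∀ j, HasDerivAt (fun y => q3 y j)
      (-(u x * (l j * q1 x j))) x)
    (hp1 : ∀ x ∈ Set.Ioo a b, ∀ j, HasDerivAt (fun y => p1 y j)
      (u x * (l j * p3 x j)) x)
    (hp2 : ∀ x ∈ Set.Ioo a b, ∀ j, HasDerivAt (fun y => p2 y j) (-(p1 x j)) x)
    (hp3 : ∀ x ∈ Set.Ioo a b, ∀ j, HasDerivAt (fun y => p3 y j) (-(p2 x j)) x) :
    ∀ x ∈ Set.Ioo a b,
      iteratedDeriv 5 G x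
        = 9 * u x * ((∑ j, (l j) ^ 2 * q3 x j * p3 x j)
            - (∑ j, (l j) ^ 2 * q1 x j * p1 x j))
          + 3 * deriv u x * ((∑ j, (l j) ^ 2 * q1 x j * p2 x j)
            + (∑ j, (l j) ^ 2 * q2 x j * p3 x j)) := by
  set Gm1 : ℝ → ℝ := fun x => ∑ j, l j * (q2 x j * p3 x j - q1 x j * p2 x j) with hGm1
  set Gm2 : ℝ → ℝ := fun x => ∑ j, l j * (q3 x j * p3 x j - 2 * (q2 x j * p2 x j)
      + q1 x j * p1 x j) with hGm2
  set Gm3 : ℝ → ℝ := fun x => ∑ j, l j * (3 * (q2 x j * p1 x j) - 3 * (q3 x j * p2 x j))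
      with hGm3
  set Gm4 : ℝ → ℝ := fun x => ∑ j, (3 * u x * (l j ^ 2 * (q1 x j * p2 x j + q2 x j * p3 x j))
      + 6 * (l j * (q3 x j * p1 x j))) with hGm4
  have hd1 : ∀ y ∈ Set.Ioo a b, HasDerivAt G (Gm1 y) y := by
    intro y hy
    rw [hG]
    have h := HasDerivAt.fun_sum (fun j (_ : j ∈ Finset.univ) =>
      (((hq1 y hy j).const_mul (l j)).mul (hp3 y hy j)))
    convert h using 1
    any_goals rfl
    exact Finset.sum_congr rfl fun j _ => by ring
  have hd2 : ∀ y ∈ Set.Ioo a b, HasDerivAt Gm1 (Gm2 y) y := by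
    intro y hy
    have h := HasDerivAt.fun_sum (fun j (_ : j ∈ Finset.univ) =>
      ((((hq2 y hy j).mul (hp3 y hy j)).sub ((hq1 y hy j).mul (hp2 y hy j))).const_mul (l j)))
    convert h using 1
    any_goals rfl
    exact Finset.sum_congr rfl fun j _ => by ring
  have hd3 : ∀ y ∈ Set.Ioo a b, HasDerivAt Gm2 (Gm3 y) y := by
    intro y hy
    have h := HasDerivAt.fun_sum (fun j (_ : j ∈ Finset.univ) =>
      (((((hq3 y hy j).mul (hp3 y hy j)).sub
          (((hq2 y hy j).mul (hp2 y hy j)).const_mul 2)).add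
          ((hq1 y hy j).mul (hp1 y hy j))).const_mul (l j)))
    convert h using 1
    any_goals rfl
    exact Finset.sum_congr rfl fun j _ => by ring
  have hd4 : ∀ y ∈ Set.Ioo a b, HasDerivAt Gm3 (Gm4 y) y := by
    intro y hy
    have h := HasDerivAt.fun_sum (fun j (_ : j ∈ Finset.univ) =>
      (((((hq2 y hy j).mul (hp1 y hy j)).const_mul 3).sub
          (((hq3 y hy j).mul (hp2 y hy j)).const_mul 3)).const_mul (l j)))
    convert h using 1
    any_goals rfl
    exact Finset.sum_congr rfl fun j _ => by ring
  have hud : ∀ y ∈ Set.Ioo a b, HasDerivAt u (deriv u y) y := by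
    intro y hy
    have hne : G y ≠ 0 := (hpos y hy).ne'
    have h : HasDerivAt u ((-(3:ℝ)/2 * G y ^ ((-(3:ℝ)/2) - 1)) * Gm1 y) y := by
      rw [hu]
      exact (Real.hasDerivAt_rpow_const (Or.inl hne)).comp y (hd1 y hy)
    exact h.deriv ▸ h
  have hd5 : ∀ y ∈ Set.Ioo a b, HasDerivAt Gm4
      (9 * u y * ((∑ j, (l j) ^ 2 * q3 y j * p3 y j)
            - (∑ j, (l j) ^ 2 * q1 y j * p1 y j))
          + 3 * deriv u y * ((∑ j, (l j) ^ 2 * q1 y j * p2 y j)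
            + (∑ j, (l j) ^ 2 * q2 y j * p3 y j))) y := by
    intro y hy
    have h := HasDerivAt.fun_sum (fun j (_ : j ∈ Finset.univ) =>
      ((((hud y hy).const_mul 3).mul
          ((((hq1 y hy j).mul (hp2 y hy j)).add
            ((hq2 y hy j).mul (hp3 y hy j))).const_mul (l j ^ 2))).add
        ((((hq3 y hy j).mul (hp1 y hy j)).const_mul (l j)).const_mul 6)))
    convert h using 1
    any_goals rfl
    simp only [mul_sub, mul_add, Finset.mul_sum, ← Finset.sum_sub_distrib,
      ← Finset.sum_add_distrib, Pi.add_apply, Pi.mul_apply]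
    exact Finset.sum_congr rfl fun j _ => by ring
  intro x hx
  have hmem : Set.Ioo a b ∈ nhds x := isOpen_Ioo.mem_nhds hx
  have e1 : deriv G =ᶠ[nhds x] Gm1 :=
    Filter.eventuallyEq_of_mem hmem fun y hy => (hd1 y hy).deriv
  have e2 : deriv (deriv G) =ᶠ[nhds x] Gm2 := by
    filter_upwards [eventually_eventually_nhds.mpr e1, hmem] with y hy hy2
    rw [Filter.EventuallyEq.deriv_eq hy, (hd2 y hy2).deriv]
  have e3 : deriv (deriv (deriv G)) =ᶠ[nhds x] Gm3 := by
    filter_upwards [eventually_eventually_nhds.mpr e2, hmem] with y hy hy2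
    rw [Filter.EventuallyEq.deriv_eq hy, (hd3 y hy2).deriv]
  have e4 : deriv (deriv (deriv (deriv G))) =ᶠ[nhds x] Gm4 := by
    filter_upwards [eventually_eventually_nhds.mpr e3, hmem] with y hy hy2
    rw [Filter.EventuallyEq.deriv_eq hy, (hd4 y hy2).deriv]
  have : iteratedDeriv 5 G x = deriv (deriv (deriv (deriv (deriv G)))) x := by
    simp [iteratedDeriv_succ, iteratedDeriv_zero]
  rw [this, e4.deriv_eq, (hd5 x hx).deriv]
end

section
/- Let A, B, C, c ∈ ℝ and ε ∈ {1, −1}, and define u(x,t) = c + ε·√( A(x−ct)² + B(x−ct) + C ). Then at every point (x,t) with A(x−ct)² + B(x−ct) + C > 0, u satisfies the third-order equation u_{xxt} + 3u_{xx}u_x + u_{xxx}u = 0. -/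
private lemma st14_q (A B C : ℝ) (ξ : ℝ) :
    HasDerivAt (fun y : ℝ => A * y ^ 2 + B * y + C) (2 * A * ξ + B) ξ := by
  have h := (((hasDerivAt_pow 2 ξ).const_mul A).add ((hasDerivAt_id ξ).const_mul B)).add_const C
  refine h.congr_deriv ?_
  push_cast
  ring

private lemma st14_sqrt (A B C : ℝ) (ξ : ℝ) (h : 0 < A * ξ ^ 2 + B * ξ + C) :
    HasDerivAt (fun y : ℝ => Real.sqrt (A * y ^ 2 + B * y + C))
      ((2 * A * ξ + B) / (2 * Real.sqrt (A * ξ ^ 2 + B * ξ + C))) ξ := by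
  have h1 := (Real.hasDerivAt_sqrt h.ne').comp ξ (st14_q A B C ξ)
  refine h1.congr_deriv ?_
  field_simp

private lemma st14_d1 (A B C eps : ℝ) (ξ : ℝ) (h : 0 < A * ξ ^ 2 + B * ξ + C) :
    HasDerivAt (fun y : ℝ => eps * Real.sqrt (A * y ^ 2 + B * y + C))
      (eps * (2 * A * ξ + B) / (2 * Real.sqrt (A * ξ ^ 2 + B * ξ + C))) ξ := by
  have h1 := (st14_sqrt A B C ξ h).const_mul eps
  refine h1.congr_deriv ?_
  ring

private lemma st14_d2 (A B C eps : ℝ) (ξ : ℝ) (h : 0 < A * ξ ^ 2 + B * ξ + C) :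
    HasDerivAt (fun y : ℝ => eps * (2 * A * y + B) / (2 * Real.sqrt (A * y ^ 2 + B * y + C)))
      (eps * (4 * A * C - B ^ 2) / (4 * (Real.sqrt (A * ξ ^ 2 + B * ξ + C)) ^ 3)) ξ := by
  have hs : 0 < Real.sqrt (A * ξ ^ 2 + B * ξ + C) := Real.sqrt_pos.mpr h
  have hs2 : (Real.sqrt (A * ξ ^ 2 + B * ξ + C)) ^ 2 = A * ξ ^ 2 + B * ξ + C :=
    Real.sq_sqrt h.le
  have hn : HasDerivAt (fun y : ℝ => eps * (2 * A * y + B)) (eps * (2 * A)) ξ := by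
    have h2 := (((hasDerivAt_id ξ).const_mul (2 * A)).add_const B).const_mul eps
    refine h2.congr_deriv ?_
    ring
  have hd : HasDerivAt (fun y : ℝ => 2 * Real.sqrt (A * y ^ 2 + B * y + C))
      (2 * ((2 * A * ξ + B) / (2 * Real.sqrt (A * ξ ^ 2 + B * ξ + C)))) ξ :=
    (st14_sqrt A B C ξ h).const_mul 2
  have hdne : 2 * Real.sqrt (A * ξ ^ 2 + B * ξ + C) ≠ 0 := by positivity
  have h1 := hn.div hd hdne
  refine h1.congr_deriv ?_
  set s := Real.sqrt (A * ξ ^ 2 + B * ξ + C) with hs_def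
  have hsne : s ≠ 0 := hs.ne'
  field_simp
  linear_combination (16 * A * eps) * hs2

private lemma st14_d3 (A B C eps : ℝ) (ξ : ℝ) (h : 0 < A * ξ ^ 2 + B * ξ + C) :
    HasDerivAt (fun y : ℝ => eps * (4 * A * C - B ^ 2) / (4 * (Real.sqrt (A * y ^ 2 + B * y + C)) ^ 3))
      (-3 * eps * (4 * A * C - B ^ 2) * (2 * A * ξ + B)
        / (8 * (Real.sqrt (A * ξ ^ 2 + B * ξ + C)) ^ 5)) ξ := by
  have hs : 0 < Real.sqrt (A * ξ ^ 2 + B * ξ + C) := Real.sqrt_pos.mpr h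
  have hn : HasDerivAt (fun _ : ℝ => eps * (4 * A * C - B ^ 2)) 0 ξ := hasDerivAt_const _ _
  have hd : HasDerivAt (fun y : ℝ => 4 * (Real.sqrt (A * y ^ 2 + B * y + C)) ^ 3)
      (4 * (3 * (Real.sqrt (A * ξ ^ 2 + B * ξ + C)) ^ 2 *
        ((2 * A * ξ + B) / (2 * Real.sqrt (A * ξ ^ 2 + B * ξ + C))))) ξ := by
    have h2 := ((st14_sqrt A B C ξ h).pow 3).const_mul 4
    refine h2.congr_deriv ?_ <;> (push_cast; ring)
  have hdne : 4 * (Real.sqrt (A * ξ ^ 2 + B * ξ + C)) ^ 3 ≠ 0 := by positivity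
  have h1 := hn.div hd hdne
  refine h1.congr_deriv ?_
  set s := Real.sqrt (A * ξ ^ 2 + B * ξ + C) with hs_def
  have hsne : s ≠ 0 := hs.ne'
  field_simp
  ring

/-- `u(x,t) = c ± √(A(x-ct)² + B(x-ct) + C)` solves the third-order
equation `u_{xxt} + 3u_{xx}u_x + u_{xxx}u = 0` at every point where the radicand is
positive. -/
theorem stmt_14 (A B C c : ℝ) (eps : ℝ) (heps : eps = 1 ∨ eps = -1)
    (u : ℝ → ℝ → ℝ)
    (hu : u = fun x t => c + eps * Real.sqrt (A * (x - c*t)^2 + B * (x - c*t) + C)) :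
    ∀ x t, 0 < A * (x - c*t)^2 + B * (x - c*t) + C →
      deriv (fun s => iteratedDeriv 2 (fun y => u y s) x) t
        + 3 * iteratedDeriv 2 (fun y => u y t) x * deriv (fun y => u y t) x
        + iteratedDeriv 3 (fun y => u y t) x * u x t = 0 := by
  intro x t hQ
  subst hu
  have hqcont : Continuous (fun ξ : ℝ => A * ξ ^ 2 + B * ξ + C) := by fun_prop
  -- first spatial derivative
  have key1 : ∀ τ y : ℝ, 0 < A * (y - c * τ) ^ 2 + B * (y - c * τ) + C →
      HasDerivAt (fun z => c + eps * Real.sqrt (A * (z - c * τ) ^ 2 + B * (z - c * τ) + C))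
        (eps * (2 * A * (y - c * τ) + B)
          / (2 * Real.sqrt (A * (y - c * τ) ^ 2 + B * (y - c * τ) + C))) y := by
    intro τ y hy
    have hshift : HasDerivAt (fun z : ℝ => z - c * τ) 1 y := (hasDerivAt_id y).sub_const _
    have h := ((st14_d1 A B C eps (y - c * τ) hy).comp y hshift).const_add c
    simpa using h
  have key2 : ∀ τ y : ℝ, 0 < A * (y - c * τ) ^ 2 + B * (y - c * τ) + C →
      HasDerivAt (fun z => eps * (2 * A * (z - c * τ) + B)
          / (2 * Real.sqrt (A * (z - c * τ) ^ 2 + B * (z - c * τ) + C)))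
        (eps * (4 * A * C - B ^ 2)
          / (4 * (Real.sqrt (A * (y - c * τ) ^ 2 + B * (y - c * τ) + C)) ^ 3)) y := by
    intro τ y hy
    have hshift : HasDerivAt (fun z : ℝ => z - c * τ) 1 y := (hasDerivAt_id y).sub_const _
    have h := (st14_d2 A B C eps (y - c * τ) hy).comp y hshift
    simpa [Function.comp_def] using h
  have key3 : ∀ τ y : ℝ, 0 < A * (y - c * τ) ^ 2 + B * (y - c * τ) + C →
      HasDerivAt (fun z => eps * (4 * A * C - B ^ 2)
          / (4 * (Real.sqrt (A * (z - c * τ) ^ 2 + B * (z - c * τ) + C)) ^ 3))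
        (-3 * eps * (4 * A * C - B ^ 2) * (2 * A * (y - c * τ) + B)
          / (8 * (Real.sqrt (A * (y - c * τ) ^ 2 + B * (y - c * τ) + C)) ^ 5)) y := by
    intro τ y hy
    have hshift : HasDerivAt (fun z : ℝ => z - c * τ) 1 y := (hasDerivAt_id y).sub_const _
    have h := (st14_d3 A B C eps (y - c * τ) hy).comp y hshift
    simpa [Function.comp_def] using h
  -- openness
  have hopen : ∀ τ : ℝ, IsOpen {y : ℝ | 0 < A * (y - c * τ) ^ 2 + B * (y - c * τ) + C} := by
    intro τ
    exact isOpen_lt continuous_const (hqcont.comp (continuous_id.sub continuous_const))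
  have dEq1 : ∀ τ y : ℝ, 0 < A * (y - c * τ) ^ 2 + B * (y - c * τ) + C →
      deriv (fun z => c + eps * Real.sqrt (A * (z - c * τ) ^ 2 + B * (z - c * τ) + C)) y
        = eps * (2 * A * (y - c * τ) + B)
          / (2 * Real.sqrt (A * (y - c * τ) ^ 2 + B * (y - c * τ) + C)) := by
    intro τ y hy; exact (key1 τ y hy).deriv
  have dEq2 : ∀ τ y : ℝ, 0 < A * (y - c * τ) ^ 2 + B * (y - c * τ) + C →
      deriv (deriv (fun z => c + eps * Real.sqrt (A * (z - c * τ) ^ 2 + B * (z - c * τ) + C))) y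
        = eps * (4 * A * C - B ^ 2)
          / (4 * (Real.sqrt (A * (y - c * τ) ^ 2 + B * (y - c * τ) + C)) ^ 3) := by
    intro τ y hy
    have hev : deriv (fun z => c + eps * Real.sqrt (A * (z - c * τ) ^ 2 + B * (z - c * τ) + C))
        =ᶠ[nhds y] fun z => eps * (2 * A * (z - c * τ) + B)
          / (2 * Real.sqrt (A * (z - c * τ) ^ 2 + B * (z - c * τ) + C)) := by
      filter_upwards [(hopen τ).mem_nhds hy] with z hz using dEq1 τ z hz
    rw [hev.deriv_eq]
    exact (key2 τ y hy).deriv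
  have dEq3 : ∀ τ y : ℝ, 0 < A * (y - c * τ) ^ 2 + B * (y - c * τ) + C →
      deriv (deriv (deriv
          (fun z => c + eps * Real.sqrt (A * (z - c * τ) ^ 2 + B * (z - c * τ) + C)))) y
        = -3 * eps * (4 * A * C - B ^ 2) * (2 * A * (y - c * τ) + B)
          / (8 * (Real.sqrt (A * (y - c * τ) ^ 2 + B * (y - c * τ) + C)) ^ 5) := by
    intro τ y hy
    have hev : deriv (deriv
          (fun z => c + eps * Real.sqrt (A * (z - c * τ) ^ 2 + B * (z - c * τ) + C)))
        =ᶠ[nhds y] fun z => eps * (4 * A * C - B ^ 2)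
          / (4 * (Real.sqrt (A * (z - c * τ) ^ 2 + B * (z - c * τ) + C)) ^ 3) := by
      filter_upwards [(hopen τ).mem_nhds hy] with z hz using dEq2 τ z hz
    rw [hev.deriv_eq]
    exact (key3 τ y hy).deriv
  -- iterated derivatives
  have hiter2 : ∀ τ y : ℝ, 0 < A * (y - c * τ) ^ 2 + B * (y - c * τ) + C →
      iteratedDeriv 2 (fun z => c + eps * Real.sqrt (A * (z - c * τ) ^ 2 + B * (z - c * τ) + C)) y
        = eps * (4 * A * C - B ^ 2)
          / (4 * (Real.sqrt (A * (y - c * τ) ^ 2 + B * (y - c * τ) + C)) ^ 3) := by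
    intro τ y hy
    have h2 : iteratedDeriv 2
        (fun z => c + eps * Real.sqrt (A * (z - c * τ) ^ 2 + B * (z - c * τ) + C))
        = deriv (deriv (fun z => c + eps * Real.sqrt (A * (z - c * τ) ^ 2 + B * (z - c * τ) + C))) := by
      rw [show (2 : ℕ) = 1 + 1 from rfl, iteratedDeriv_succ, iteratedDeriv_one]
    rw [h2]
    exact dEq2 τ y hy
  have hiter3 :
      iteratedDeriv 3 (fun z => c + eps * Real.sqrt (A * (z - c * t) ^ 2 + B * (z - c * t) + C)) x
        = -3 * eps * (4 * A * C - B ^ 2) * (2 * A * (x - c * t) + B)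
          / (8 * (Real.sqrt (A * (x - c * t) ^ 2 + B * (x - c * t) + C)) ^ 5) := by
    have h3 : iteratedDeriv 3
        (fun z => c + eps * Real.sqrt (A * (z - c * t) ^ 2 + B * (z - c * t) + C))
        = deriv (deriv (deriv (fun z => c + eps * Real.sqrt (A * (z - c * t) ^ 2 + B * (z - c * t) + C)))) := by
      rw [show (3 : ℕ) = 1 + 1 + 1 from rfl, iteratedDeriv_succ, iteratedDeriv_succ, iteratedDeriv_one]
    rw [h3]
    exact dEq3 t x hQ
  -- time derivative of the second spatial derivative
  have htime : deriv (fun s => iteratedDeriv 2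
      (fun z => c + eps * Real.sqrt (A * (z - c * s) ^ 2 + B * (z - c * s) + C)) x) t
      = (-3 * eps * (4 * A * C - B ^ 2) * (2 * A * (x - c * t) + B)
          / (8 * (Real.sqrt (A * (x - c * t) ^ 2 + B * (x - c * t) + C)) ^ 5)) * (-c) := by
    have hopen' : IsOpen {s : ℝ | 0 < A * (x - c * s) ^ 2 + B * (x - c * s) + C} :=
      isOpen_lt continuous_const (hqcont.comp (by fun_prop))
    have hev : (fun s => iteratedDeriv 2
        (fun z => c + eps * Real.sqrt (A * (z - c * s) ^ 2 + B * (z - c * s) + C)) x)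
        =ᶠ[nhds t] fun s => eps * (4 * A * C - B ^ 2)
          / (4 * (Real.sqrt (A * (x - c * s) ^ 2 + B * (x - c * s) + C)) ^ 3) := by
      filter_upwards [hopen'.mem_nhds hQ] with s hs using hiter2 s x hs
    rw [hev.deriv_eq]
    have hshift : HasDerivAt (fun s : ℝ => x - c * s) (-c) t := by
      simpa using ((hasDerivAt_id t).const_mul c).const_sub x
    exact ((st14_d3 A B C eps (x - c * t) hQ).comp t hshift).deriv
  -- assemble
  have hbeta : ∀ s : ℝ, (fun y => (fun x t => c + eps * Real.sqrt
        (A * (x - c*t) ^ 2 + B * (x - c*t) + C)) y s)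
      = fun z => c + eps * Real.sqrt (A * (z - c * s) ^ 2 + B * (z - c * s) + C) := fun _ => rfl
  simp only [hbeta]
  rw [htime, hiter3, hiter2 t x hQ, dEq1 t x hQ]
  have hs : 0 < Real.sqrt (A * (x - c * t) ^ 2 + B * (x - c * t) + C) := Real.sqrt_pos.mpr hQ
  set s := Real.sqrt (A * (x - c * t) ^ 2 + B * (x - c * t) + C) with hs_def
  have hsne : s ≠ 0 := hs.ne'
  field_simp
  ring
end

section
/- Let c ∈ ℝ and let f be three times differentiable on an open interval I ⊆ ℝ. Then ((f−c)²)''' = 2·( (f−c)·f''' + 3·f'·f'' ) on I. Consequently, f satisfies the traveling wave reduction −c·f''' + 3·f''·f' + f·f''' = 0 on I if and only if ((f−c)²)''' = 0 on I (equivalently, (f−c)² coincides on I with a quadratic polynomial Aξ² + Bξ + C). -/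
lemma aux_const {s : Set ℝ} (hs : Convex ℝ s) (ho : IsOpen s) {h : ℝ → ℝ}
    (hd : ∀ x ∈ s, HasDerivAt h 0 x) {x y : ℝ} (hx : x ∈ s) (hy : y ∈ s) :
    h x = h y := by
  apply hs.is_const_of_fderivWithin_eq_zero
    (fun z hz => ((hd z hz).differentiableAt).differentiableWithinAt) ?_ hx hy
  intro z hz
  rw [fderivWithin_of_isOpen ho hz, (hd z hz).hasFDerivAt.fderiv]
  ext; simp



/-- for `f` three times differentiable on an open interval `I = (a,b)`,
`((f-c)²)''' = 2((f-c)f''' + 3f'f'')` on `I`; consequently `f` satisfies the traveling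
wave reduction `-cf''' + 3f''f' + ff''' = 0` on `I` iff `((f-c)²)''' = 0` on `I`, iff
`(f-c)²` coincides on `I` with a quadratic polynomial `Aξ² + Bξ + C`. -/
theorem stmt_15 (c a b : ℝ) (f : ℝ → ℝ)
    (h1 : ∀ x ∈ Set.Ioo a b, DifferentiableAt ℝ f x)
    (h2 : ∀ x ∈ Set.Ioo a b, DifferentiableAt ℝ (deriv f) x)
    (h3 : ∀ x ∈ Set.Ioo a b, DifferentiableAt ℝ (deriv (deriv f)) x) :
    (∀ x ∈ Set.Ioo a b,
      iteratedDeriv 3 (fun y => (f y - c) ^ 2) x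
        = 2 * ((f x - c) * iteratedDeriv 3 f x + 3 * deriv f x * iteratedDeriv 2 f x)) ∧
    ((∀ x ∈ Set.Ioo a b,
        -c * iteratedDeriv 3 f x + 3 * iteratedDeriv 2 f x * deriv f x
          + f x * iteratedDeriv 3 f x = 0)
      ↔ (∀ x ∈ Set.Ioo a b, iteratedDeriv 3 (fun y => (f y - c) ^ 2) x = 0)) ∧
    ((∀ x ∈ Set.Ioo a b, iteratedDeriv 3 (fun y => (f y - c) ^ 2) x = 0)
      ↔ ∃ A B C : ℝ, ∀ x ∈ Set.Ioo a b, (f x - c) ^ 2 = A * x ^ 2 + B * x + C) := by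
  set I := Set.Ioo a b with hI
  have hIo : IsOpen I := isOpen_Ioo
  have hIc : Convex ℝ I := convex_Ioo a b
  set g : ℝ → ℝ := fun y => (f y - c) ^ 2 with hg
  -- first derivative of g on I
  have hg1 : ∀ x ∈ I, HasDerivAt g (2 * (f x - c) * deriv f x) x := by
    intro x hx
    have := (((h1 x hx).hasDerivAt).sub_const c).pow 2
    convert this using 1
    · rfl
    · rfl
    · rfl
    push_cast
    ring
  have hdg : Set.EqOn (deriv g) (fun y => 2 * (f y - c) * deriv f y) I :=
    fun x hx => (hg1 x hx).deriv
  -- second derivative of g on I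
  have hg2 : ∀ x ∈ I, HasDerivAt (deriv g)
      (2 * deriv f x ^ 2 + 2 * (f x - c) * deriv (deriv f) x) x := by
    intro x hx
    have h' : HasDerivAt (fun y => 2 * (f y - c) * deriv f y)
        (2 * deriv f x ^ 2 + 2 * (f x - c) * deriv (deriv f) x) x := by
      have := ((((h1 x hx).hasDerivAt).sub_const c).fun_mul ((h2 x hx).hasDerivAt)).const_mul 2
      convert this using 1
      · rfl
      · rfl
      · ext y; ring
      · ring
    exact h'.congr_of_eventuallyEq (Filter.eventuallyEq_of_mem (hIo.mem_nhds hx) hdg)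
  have hdg2 : Set.EqOn (deriv (deriv g))
      (fun y => 2 * deriv f y ^ 2 + 2 * (f y - c) * deriv (deriv f) y) I :=
    fun x hx => (hg2 x hx).deriv
  -- third derivative of g on I
  have hg3 : ∀ x ∈ I, HasDerivAt (deriv (deriv g))
      (2 * ((f x - c) * deriv (deriv (deriv f)) x + 3 * deriv f x * deriv (deriv f) x)) x := by
    intro x hx
    have h' : HasDerivAt (fun y => 2 * deriv f y ^ 2 + 2 * (f y - c) * deriv (deriv f) y)
        (2 * ((f x - c) * deriv (deriv (deriv f)) x + 3 * deriv f x * deriv (deriv f) x)) x := by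
      have ha := (((h2 x hx).hasDerivAt).fun_pow 2).const_mul 2
      have hb := (((((h1 x hx).hasDerivAt).sub_const c).fun_mul ((h3 x hx).hasDerivAt)).const_mul 2)
      have := ha.fun_add hb
      convert this using 1
      · rfl
      · rfl
      · ext y; ring
      · push_cast; ring
    exact h'.congr_of_eventuallyEq (Filter.eventuallyEq_of_mem (hIo.mem_nhds hx) hdg2)
  have hit3 : ∀ (h : ℝ → ℝ), iteratedDeriv 3 h = deriv (deriv (deriv h)) := by
    intro h
    simp [iteratedDeriv_succ, iteratedDeriv_zero]
  have hit2 : iteratedDeriv 2 f = deriv (deriv f) := by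
    simp [iteratedDeriv_succ, iteratedDeriv_zero]
  -- Part 1
  have part1 : ∀ x ∈ I, iteratedDeriv 3 g x
      = 2 * ((f x - c) * iteratedDeriv 3 f x + 3 * deriv f x * iteratedDeriv 2 f x) := by
    intro x hx
    rw [hit3, hit3, hit2]
    exact (hg3 x hx).deriv
  refine ⟨part1, ?_, ?_⟩
  · constructor
    · intro h x hx
      rw [part1 x hx]
      have := h x hx
      nlinarith [this]
    · intro h x hx
      have := h x hx
      rw [part1 x hx] at this
      nlinarith [this]
  · constructor
    · intro h0
      by_cases hab : a < b
      · have hx0 : (a + b) / 2 ∈ I := Set.mem_Ioo.mpr ⟨by linarith, by linarith⟩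
        set x0 := (a + b) / 2
        set K := deriv (deriv g) x0 with hK
        set L := deriv g x0 - K * x0 with hL
        set M := g x0 - (K / 2 * x0 ^ 2 + L * x0) with hM
        -- third derivative of g vanishes
        have h0' : ∀ x ∈ I, HasDerivAt (deriv (deriv g)) 0 x := by
          intro x hx
          have := hg3 x hx
          have he : deriv (deriv (deriv g)) x = 0 := by
            rw [← hit3]; exact h0 x hx
          rwa [← this.deriv, he] at this
        have hcK : ∀ x ∈ I, deriv (deriv g) x = K :=
          fun x hx => aux_const hIc hIo h0' hx hx0
        have hcL : ∀ x ∈ I, deriv g x = K * x + L := by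
          intro x hx
          have hd : ∀ y ∈ I, HasDerivAt (fun z => deriv g z - K * z) 0 y := by
            intro y hy
            have := ((hg2 y hy).differentiableAt.hasDerivAt).fun_sub
              ((hasDerivAt_id y).const_mul K)
            simpa [hcK y hy] using this
          have := aux_const hIc hIo hd hx hx0
          rw [hL]; linarith
        have hcM : ∀ x ∈ I, g x = K / 2 * x ^ 2 + L * x + M := by
          intro x hx
          have hd : ∀ y ∈ I, HasDerivAt (fun z => g z - (K / 2 * z ^ 2 + L * z)) 0 y := by
            intro y hy
            have hp : HasDerivAt (fun z => K / 2 * z ^ 2 + L * z)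
                (K * y + L) y := by
              have := ((hasDerivAt_pow 2 y).const_mul (K / 2)).fun_add
                ((hasDerivAt_id y).const_mul L)
              convert this using 1
              · rfl
              · rfl
              · rfl
              push_cast; ring
            have := ((hg1 y hy).differentiableAt.hasDerivAt).fun_sub hp
            simpa [hcL y hy] using this
          have := aux_const hIc hIo hd hx hx0
          rw [hM]; linarith
        exact ⟨K / 2, L, M, fun x hx => hcM x hx⟩
      · exact ⟨0, 0, 0, fun x hx => absurd hx (by simp [hI, Set.Ioo_eq_empty, hab])⟩
    · rintro ⟨A, B, C, hq⟩ x hx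
      set q : ℝ → ℝ := fun z => A * z ^ 2 + B * z + C with hqdef
      have heq : g =ᶠ[nhds x] q :=
        Filter.eventuallyEq_of_mem (hIo.mem_nhds hx) (fun y hy => hq y hy)
      have : iteratedDeriv 3 g x = iteratedDeriv 3 q x := by
        rw [hit3, hit3]
        exact (heq.deriv.deriv.deriv).eq_of_nhds
      rw [this, hit3]
      have hq1 : deriv q = fun z => 2 * A * z + B := by
        funext y
        have := ((hasDerivAt_pow 2 y).const_mul A).fun_add
          (((hasDerivAt_id y).const_mul B).add_const C)
        have h2 : HasDerivAt q (2 * A * y + B) y := by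
          convert this using 1
          · rfl
          · rfl
          · ext z; simp only [id_eq]; ring
          · push_cast; ring
        exact h2.deriv
      have hq2 : deriv (deriv q) = fun _ => 2 * A := by
        funext y
        rw [hq1]
        have : HasDerivAt (fun z : ℝ => 2 * A * z + B) (2 * A) y := by
          have := ((hasDerivAt_id y).const_mul (2 * A)).add_const B
          simpa using this
        exact this.deriv
      rw [hq2]
      simp
end

section
/- Define u(x,t) = ( x + (336/625)·t )^{−12/5} on the open set { (x,t) ∈ ℝ² : x + (336/625)t > 0 }. Then u satisfies the fifth-order equation u_t = ∂⁵_x( u^{−2/3} ) at every point of this set. That is, u = ξ^{−γ} with ξ = x − ct is a traveling wave solution of u_t = ∂⁵_x(u^{−2/3}) with γ = 12/5 and speed c = −336/625. -/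
/-- If `f` agrees with `y ↦ (y+a)^p` on the open set `{y | 0 < y + a}`, then its `n`-th
iterated derivative there is the usual falling-factorial formula. -/
lemma iterated_rpow_aux (a : ℝ) (f : ℝ → ℝ) (p : ℝ)
    (hf : ∀ y, 0 < y + a → f y = (y + a) ^ p) :
    ∀ n : ℕ, ∀ x, 0 < x + a →
      iteratedDeriv n f x = (∏ i ∈ Finset.range n, (p - i)) * (x + a) ^ (p - n) := by
  intro n
  induction n with
  | zero =>
      intro x hx
      simp [iteratedDeriv_zero, hf x hx]
  | succ n IH =>
      intro x hx
      have hS : IsOpen {y : ℝ | 0 < y + a} :=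
        isOpen_lt continuous_const (continuous_id.add continuous_const)
      have hev : iteratedDeriv n f =ᶠ[nhds x]
          fun y => (∏ i ∈ Finset.range n, (p - i)) * (y + a) ^ (p - n) :=
        Filter.eventuallyEq_of_mem (hS.mem_nhds hx) (fun y hy => IH y hy)
      rw [iteratedDeriv_succ, hev.deriv_eq]
      have h1 : HasDerivAt (fun y : ℝ => (y + a) ^ (p - n))
          ((p - n) * (x + a) ^ (p - n - 1) * 1) x := by
        exact (Real.hasDerivAt_rpow_const (Or.inl (ne_of_gt hx))).comp x
          ((hasDerivAt_id x).add_const a)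
      have h2 := (h1.const_mul (∏ i ∈ Finset.range n, (p - i))).deriv
      rw [h2, Finset.prod_range_succ]
      push_cast
      rw [show p - ((n:ℝ) + 1) = p - n - 1 by ring]
      ring

/-- `u(x,t) = (x + (336/625)t)^{-12/5}` is a traveling wave solution of the
fifth-order equation `u_t = ∂⁵ₓ(u^{-2/3})` on the open set `{x + (336/625)t > 0}`. -/
theorem stmt_17 (u : ℝ → ℝ → ℝ)
    (hu : u = fun x t => (x + (336/625) * t) ^ (-(12:ℝ)/5)) :
    ∀ x t, 0 < x + (336/625) * t →
      deriv (fun s => u x s) t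
        = iteratedDeriv 5 (fun y => u y t ^ (-(2:ℝ)/3)) x := by
  subst hu
  intro x t hx
  set a : ℝ := (336/625) * t with ha
  -- Right-hand side
  have hf : ∀ y, 0 < y + a →
      ((y + a) ^ (-(12:ℝ)/5)) ^ (-(2:ℝ)/3) = (y + a) ^ ((8:ℝ)/5) := by
    intro y hy
    rw [← Real.rpow_mul hy.le]
    norm_num
  have hR := iterated_rpow_aux a (fun y => ((y + (336/625) * t) ^ (-(12:ℝ)/5)) ^ (-(2:ℝ)/3))
    ((8:ℝ)/5) (fun y hy => hf y hy) 5 x hx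
  -- Left-hand side
  have h1 : HasDerivAt (fun s : ℝ => x + (336/625) * s) (336/625) t := by
    simpa using ((hasDerivAt_id t).const_mul (336/625 : ℝ)).const_add x
  have h2 : HasDerivAt (fun s : ℝ => (x + (336/625) * s) ^ (-(12:ℝ)/5))
      ((-(12:ℝ)/5) * (x + a) ^ (-(12:ℝ)/5 - 1) * (336/625)) t :=
    by have := (Real.hasDerivAt_rpow_const (p := -(12:ℝ)/5) (Or.inl (ne_of_gt hx))).comp t h1; exact this
  rw [h2.deriv, hR]
  have hprod : (∏ i ∈ Finset.range 5, ((8:ℝ)/5 - i)) = -4032/3125 := by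
    simp [Finset.prod_range_succ]
    norm_num
  rw [hprod]
  norm_num
  ring_nf
end

section
/- Define u(x,t) = ( x − (31680/117649)·t )^{−18/7} on the open set { (x,t) ∈ ℝ² : x − (31680/117649)t > 0 }. Then u satisfies the seventh-order equation u_t = ∂⁵_x[ ( (u^{−1/3})_{xx} − 2·((u^{−1/6})_x)² ) / u ] at every point of this set. That is, u = ξ^{−γ} with ξ = x − ct is a traveling wave solution with γ = 18/7 and speed c = 31680/117649. -/
open Filter Finset

private lemma evpos {c x : ℝ} (h : 0 < x - c) : ∀ᶠ y in nhds x, 0 < y - c := by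
  have : IsOpen {y : ℝ | 0 < y - c} :=
    isOpen_lt continuous_const (continuous_id.sub continuous_const)
  exact this.eventually_mem h

private lemma keyDeriv (c : ℝ) : ∀ (n : ℕ) (A r x : ℝ), 0 < x - c →
    iteratedDeriv n (fun y => A * (y - c) ^ r) x
      = (A * ∏ i ∈ Finset.range n, (r - i)) * (x - c) ^ (r - n) := by
  intro n
  induction n with
  | zero => intro A r x hx; simp
  | succ n ih =>
    intro A r x hx
    rw [iteratedDeriv_succ']
    have hev : (deriv fun y => A * (y - c) ^ r)
        =ᶠ[nhds x] (fun y => (A * r) * (y - c) ^ (r - 1)) := by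
      filter_upwards [evpos hx] with y hy
      have h1 : HasDerivAt (fun y : ℝ => y - c) 1 y := (hasDerivAt_id y).sub_const c
      have h2 := (h1.rpow_const (p := r) (Or.inl (ne_of_gt hy))).const_mul A
      rw [h2.deriv]; ring
    rw [hev.iteratedDeriv_eq n, ih (A * r) (r - 1) x hx]
    rw [Finset.prod_range_succ' (fun i => r - (i : ℝ))]
    have he : r - 1 - (n : ℝ) = r - ((n : ℕ) + 1 : ℕ) := by push_cast; ring
    rw [he]
    congr 1
    rw [mul_comm (∏ i ∈ Finset.range n, (r - ((i : ℕ) + 1 : ℕ))) (r - (0 : ℕ))]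
    push_cast
    rw [sub_zero, ← mul_assoc]
    congr 1
    apply Finset.prod_congr rfl
    intro i _; ring

/-- `u(x,t) = (x - (31680/117649)t)^{-18/7}` is a traveling wave solution of
the seventh-order equation `u_t = ∂⁵ₓ[((u^{-1/3})_{xx} - 2((u^{-1/6})_x)²)/u]` on the open
set `{x - (31680/117649)t > 0}`. -/
theorem stmt_18 (u : ℝ → ℝ → ℝ)
    (hu : u = fun x t => (x - (31680/117649) * t) ^ (-(18:ℝ)/7)) :
    ∀ x t, 0 < x - (31680/117649) * t →
      deriv (fun s => u x s) t
        = iteratedDeriv 5 (fun y =>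
            (iteratedDeriv 2 (fun z => u z t ^ (-(1:ℝ)/3)) y
              - 2 * (deriv (fun z => u z t ^ (-(1:ℝ)/6)) y) ^ 2) / u y t) x := by
  subst hu
  intro x t hxt
  set c : ℝ := 31680/117649 with hc
  -- LHS
  have hL : deriv (fun s : ℝ => (x - c * s) ^ (-(18:ℝ)/7)) t
      = (18/7 * c) * (x - c * t) ^ (-(25:ℝ)/7) := by
    have h1 : HasDerivAt (fun s : ℝ => x - c * s) (-c) t := by
      simpa using ((hasDerivAt_id t).const_mul c).const_sub x
    have h2 := h1.rpow_const (p := -(18:ℝ)/7) (Or.inl (ne_of_gt hxt))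
    rw [h2.deriv]
    have : -(18:ℝ)/7 - 1 = -(25:ℝ)/7 := by norm_num
    rw [this]; ring
  rw [hL]
  -- RHS: the inner function equals -24/49 * (y - c*t)^(10/7) near x
  have hev : (fun y =>
      (iteratedDeriv 2 (fun z => ((z - c * t) ^ (-(18:ℝ)/7)) ^ (-(1:ℝ)/3)) y
        - 2 * (deriv (fun z => ((z - c * t) ^ (-(18:ℝ)/7)) ^ (-(1:ℝ)/6)) y) ^ 2)
        / ((y - c * t) ^ (-(18:ℝ)/7)))
      =ᶠ[nhds x] (fun y => (-24/49) * (y - c * t) ^ ((10:ℝ)/7)) := by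
    filter_upwards [evpos hxt] with y hy
    -- rewrite the two inner functions near y
    have hev3 : (fun z => ((z - c * t) ^ (-(18:ℝ)/7)) ^ (-(1:ℝ)/3))
        =ᶠ[nhds y] (fun z => (1:ℝ) * (z - c * t) ^ ((6:ℝ)/7)) := by
      filter_upwards [evpos hy] with z hz
      rw [one_mul, ← Real.rpow_mul (le_of_lt hz)]
      norm_num
    have hev6 : (fun z => ((z - c * t) ^ (-(18:ℝ)/7)) ^ (-(1:ℝ)/6))
        =ᶠ[nhds y] (fun z => (1:ℝ) * (z - c * t) ^ ((3:ℝ)/7)) := by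
      filter_upwards [evpos hy] with z hz
      rw [one_mul, ← Real.rpow_mul (le_of_lt hz)]
      norm_num
    have hp : 0 < y - c * t := hy
    have e2 : iteratedDeriv 2 (fun z => ((z - c * t) ^ (-(18:ℝ)/7)) ^ (-(1:ℝ)/3)) y
        = -6/49 * (y - c * t) ^ (-(8:ℝ)/7) := by
      rw [hev3.iteratedDeriv_eq 2, keyDeriv (c * t) 2 1 ((6:ℝ)/7) y hy]
      norm_num [Finset.prod_range_succ]
    have e1 : deriv (fun z => ((z - c * t) ^ (-(18:ℝ)/7)) ^ (-(1:ℝ)/6)) y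
        = 3/7 * (y - c * t) ^ (-(4:ℝ)/7) := by
      rw [← iteratedDeriv_one, hev6.iteratedDeriv_eq 1, keyDeriv (c * t) 1 1 ((3:ℝ)/7) y hy]
      norm_num
    have hsq : ((y - c * t) ^ (-(4:ℝ)/7)) ^ 2 = (y - c * t) ^ (-(8:ℝ)/7) := by
      rw [sq, ← Real.rpow_add hp]; norm_num
    have hmm : (y - c * t) ^ ((10:ℝ)/7) * (y - c * t) ^ (-(18:ℝ)/7)
        = (y - c * t) ^ (-(8:ℝ)/7) := by
      rw [← Real.rpow_add hp]; norm_num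
    rw [e2, e1, mul_pow, hsq, div_eq_iff (ne_of_gt (Real.rpow_pos_of_pos hp _)),
      mul_assoc, hmm]
    ring
  rw [hev.iteratedDeriv_eq 5, keyDeriv (c * t) 5 (-24/49) ((10:ℝ)/7) x hxt]
  have hprod : ((-24/49 : ℝ) * ∏ i ∈ Finset.range 5, ((10:ℝ)/7 - i)) = 18/7 * c := by
    simp [Finset.prod_range_succ]
    norm_num [hc]
  rw [hprod]
  congr 1
  norm_num
end

section
/- Let l ≥ 1 be a natural number and m, n integers with n ≠ 0 and m + n ≠ 0. Set α := m(l−1)/(m+n), c := (m/n)·∏_{k=1}^{l−1}( α − k ) (the empty product for l = 1 being 1), and define u(x,t) = ( x − c·t )^{ −n(l−1)/(m+n) } on the open set { (x,t) ∈ ℝ² : x − ct > 0 }. Then u satisfies ∂_t u = ∂^l_x( u^{−m/n} ) at every point of this set. -/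
lemma aux_iter (b : ℝ) : ∀ (l : ℕ) (f : ℝ → ℝ) (C a : ℝ),
    (∀ y, b < y → f y = C * (y - b) ^ a) →
    ∀ x, b < x → iteratedDeriv l f x
      = C * (∏ k ∈ Finset.range l, (a - (k : ℝ))) * (x - b) ^ (a - l) := by
  intro l
  induction l with
  | zero =>
    intro f C a hf x hx
    simp [iteratedDeriv_zero, hf x hx]
  | succ l ih =>
    intro f C a hf x hx
    rw [iteratedDeriv_succ']
    have hderiv : ∀ y, b < y → deriv f y = (C * a) * (y - b) ^ (a - 1) := by
      intro y hy
      have hev : f =ᶠ[nhds y] fun z => C * (z - b) ^ a := by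
        filter_upwards [IsOpen.mem_nhds (isOpen_lt continuous_const continuous_id) hy] with z hz
        exact hf z hz
      rw [hev.deriv_eq]
      have h1 : HasDerivAt (fun z : ℝ => z - b) 1 y := (hasDerivAt_id y).sub_const b
      have h2 := (h1.rpow_const (p := a) (Or.inl (sub_ne_zero.mpr (ne_of_gt hy)))).const_mul C
      rw [h2.deriv]
      ring
    rw [ih (deriv f) (C * a) (a - 1) hderiv x hx]
    have hp : ∏ k ∈ Finset.range (l + 1), (a - (k : ℝ))
        = (∏ k ∈ Finset.range l, (a - 1 - (k : ℝ))) * a := by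
      rw [Finset.prod_range_succ']
      simp only [Nat.cast_zero, sub_zero]
      congr 1
      exact Finset.prod_congr rfl fun k _ => by push_cast; ring
    have he : a - 1 - (l : ℝ) = a - ((l + 1 : ℕ) : ℝ) := by push_cast; ring
    rw [hp, he]
    ring

/-- for `l ≥ 1`, `m, n ∈ ℤ` with `n ≠ 0` and `m + n ≠ 0`, set
`α = m(l-1)/(m+n)` and `c = (m/n)·∏_{k=1}^{l-1}(α - k)`.  Then
`u(x,t) = (x - ct)^{-n(l-1)/(m+n)}` satisfies `∂_t u = ∂ˡₓ(u^{-m/n})` on the open set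
`{x - ct > 0}`. -/
theorem stmt_19 (l : ℕ) (hl : 1 ≤ l) (m n : ℤ) (hn : n ≠ 0) (hmn : m + n ≠ 0)
    (α c : ℝ)
    (hα : α = (m : ℝ) * (l - 1 : ℕ) / ((m : ℝ) + (n : ℝ)))
    (hc : c = (m : ℝ) / (n : ℝ) * ∏ k ∈ Finset.Icc 1 (l - 1), (α - (k : ℕ)))
    (u : ℝ → ℝ → ℝ)
    (hu : u = fun x t =>
      (x - c * t) ^ (-((n : ℝ) * (l - 1 : ℕ)) / ((m : ℝ) + (n : ℝ)))) :
    ∀ x t, 0 < x - c * t →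
      deriv (fun s => u x s) t
        = iteratedDeriv l (fun y => u y t ^ (-(m : ℝ) / (n : ℝ))) x := by
  obtain ⟨j, rfl⟩ : ∃ j, l = j + 1 := ⟨l - 1, (Nat.succ_pred_eq_of_pos hl).symm⟩
  simp only [Nat.add_sub_cancel] at hα hc hu ⊢
  intro x t hpos
  have hn' : (n : ℝ) ≠ 0 := Int.cast_ne_zero.mpr hn
  have hmn' : (m : ℝ) + (n : ℝ) ≠ 0 := by
    have : ((m + n : ℤ) : ℝ) ≠ 0 := Int.cast_ne_zero.mpr hmn
    push_cast at this; exact this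
  set β : ℝ := -((n : ℝ) * (j : ℕ)) / ((m : ℝ) + (n : ℝ)) with hβ
  subst hu
  -- LHS
  have hlt : c * t < x := by linarith
  have h1 : HasDerivAt (fun s : ℝ => x - c * s) (-c) t := by
    simpa using ((hasDerivAt_id t).const_mul c).const_sub x
  have h2 := h1.rpow_const (p := β) (Or.inl (ne_of_gt hpos))
  rw [h2.deriv]
  -- RHS
  have hyp : ∀ y, c * t < y →
      ((y - c * t) ^ β) ^ (-(m : ℝ) / (n : ℝ)) = 1 * (y - c * t) ^ α := by
    intro y hy
    rw [one_mul, ← Real.rpow_mul (by linarith)]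
    congr 1
    rw [hα, hβ]
    field_simp
  -- products
  have hprod2 : ∀ J : ℕ, ∏ k ∈ Finset.range J, (α - ((k + 1 : ℕ) : ℝ))
      = ∏ k ∈ Finset.Icc 1 J, (α - (k : ℕ)) := by
    intro J
    induction J with
    | zero => simp
    | succ J ihJ =>
      rw [Finset.prod_range_succ, Finset.prod_Icc_succ_top (Nat.one_le_iff_ne_zero.mpr (Nat.succ_ne_zero J)), ihJ]
  have hprod : ∏ k ∈ Finset.range (j + 1), (α - (k : ℝ))
      = α * ∏ k ∈ Finset.Icc 1 j, (α - (k : ℕ)) := by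
    rw [Finset.prod_range_succ']
    simp only [Nat.cast_zero, sub_zero]
    rw [hprod2 j, mul_comm]
  have hexp : β - 1 = α - ((j + 1 : ℕ) : ℝ) := by
    rw [hα, hβ]
    field_simp
    push_cast; ring
  have hco : -c * β = α * ∏ k ∈ Finset.Icc 1 j, (α - (k : ℕ)) := by
    rw [hc, hα, hβ]
    field_simp
  rw [aux_iter (c * t) (j + 1) _ 1 α hyp x hlt, hprod, hexp, one_mul, ← hco]
end
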